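/- arXiv:2001.00536 — 8 statements merged into one kernel-verified Lean document; each statement's English description precedes it below -/
import Mathlib

section
/- Let n ≥ 2 and let a_1, …, a_n be integers with a_i ≥ 2, let E be the loop exponent matrix, and set D = ∏_{k=1}^{n} a_k + (−1)^{n+1}. Then E is invertible and the entries of E^{-1} are: (E^{-1})_{ij} = (−1)^{j−i} (∏_{k=j+1}^{n} a_k)(∏_{k=1}^{i−1} a_k) / D when j ≥ i, and (E^{-1})_{ij} = (−1)^{n+j−i} (∏_{k=j+1}^{i−1} a_k) / D when j < i, where empty products equal 1. -/
/-!
Row `i` of `E` is `a i • eᵢ + e_{i+1}` with indices taken cyclically, so `E = diag a + P` for the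
permutation matrix `P` of the cyclic shift and `(E * B) i j = a i * B i j + B (i + 1) j`.
Peeling the factor `a i` off the products shows that the proposed numerators `N` satisfy
`a i * N i j + N (i + 1) j = δᵢⱼ * D`, i.e. `E * N = D • 1`; and `D ≠ 0` because `∏ a_k ≥ 2`.
-/

open Finset Matrix

theorem Fin.prod_Ioi_eq_prod_Ico {M : Type*} [CommMonoid M] {n : ℕ} (j : Fin n) (f : ℕ → M) :
    ∏ k ∈ Ioi j, f k = ∏ k ∈ Ico (j + 1 : ℕ) n, f k := by
  rw [Ico_add_one_left_eq_Ioo, ← Fin.map_valEmbedding_Ioi, prod_map]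
  rfl

theorem Fin.prod_Iio_eq_prod_range {M : Type*} [CommMonoid M] {n : ℕ} (i : Fin n) (f : ℕ → M) :
    ∏ k ∈ Iio i, f k = ∏ k ∈ range i, f k := by
  rw [← Nat.Iio_eq_range, ← Fin.map_valEmbedding_Iio, prod_map]
  rfl

theorem Fin.prod_Ioo_eq_prod_Ico {M : Type*} [CommMonoid M] {n : ℕ} (i j : Fin n) (f : ℕ → M) :
    ∏ k ∈ Ioo j i, f k = ∏ k ∈ Ico (j + 1 : ℕ) i, f k := by
  rw [Ico_add_one_left_eq_Ioo, ← Fin.map_valEmbedding_Ioo, prod_map]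
  rfl

namespace LoopExponentMatrix

section CommRing

variable {R : Type*} [CommRing R]

/-- Numerator of the `(i, j)` entry of the inverse over the common denominator `denom n a`. -/
def invNum (n : ℕ) (a : ℕ → R) (i j : ℕ) : R :=
  if i ≤ j then (-1) ^ (j - i) * ((∏ k ∈ Ico (j + 1) n, a k) * ∏ k ∈ range i, a k)
  else (-1) ^ (n + j - i) * ∏ k ∈ Ico (j + 1) i, a k

def denom (n : ℕ) (a : ℕ → R) : R := ∏ k ∈ range n, a k + (-1) ^ (n + 1)

variable {n : ℕ} (a : ℕ → R)

theorem mul_invNum_add_invNum_succ {i j : ℕ} (hi : i + 1 < n) (hj : j < n) :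
    a i * invNum n a i j + invNum n a (i + 1) j = if i = j then denom n a else 0 := by
  unfold invNum
  rcases lt_trichotomy i j with hij | rfl | hij
  · obtain ⟨d, rfl⟩ := Nat.exists_eq_add_of_lt hij
    rw [if_pos hij.le, if_pos (by omega), if_neg hij.ne, show i + d + 1 - i = d + 1 by omega,
      show i + d + 1 - (i + 1) = d by omega, prod_range_succ, pow_succ]
    ring
  · rw [if_pos le_rfl, if_neg (by omega), if_pos rfl, Nat.sub_self, Ico_self, prod_empty, denom,
      ← prod_range_mul_prod_Ico _ hi.le, prod_range_succ,
      show n + i - (i + 1) = n - 1 + 0 by omega, show n + 1 = n - 1 + 2 by omega]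
    simp only [pow_add]
    ring
  · rw [if_neg (by omega), if_neg (by omega), if_neg hij.ne', prod_Ico_succ_top (by omega),
      show n + j - i = n + j - (i + 1) + 1 by omega, pow_succ]
    ring

theorem mul_invNum_add_invNum_zero {m j : ℕ} (hj : j ≤ m) :
    a m * invNum (m + 1) a m j + invNum (m + 1) a 0 j = if m = j then denom (m + 1) a else 0 := by
  unfold invNum
  rcases hj.lt_or_eq with hjm | rfl
  · rw [if_neg (by omega), if_pos (Nat.zero_le j), if_neg hjm.ne', prod_Ico_succ_top (by omega),
      show m + 1 + j - m = j + 1 by omega, Nat.sub_zero, pow_succ]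
    simp only [range_zero, prod_empty]
    ring
  · rw [if_pos le_rfl, if_pos (Nat.zero_le j), if_pos rfl, Ico_self, denom, prod_range_succ]
    simp only [range_zero, prod_empty, Nat.sub_self, Nat.sub_zero, pow_succ]
    ring

theorem invNum_val (i j : Fin n) :
    invNum n a i j = if (i : ℕ) ≤ j then
        (-1) ^ ((j : ℕ) - i) * ((∏ k ∈ Ioi j, a k) * ∏ k ∈ Iio i, a k)
      else (-1) ^ (n + (j : ℕ) - i) * ∏ k ∈ Ioo j i, a k := by
  rw [invNum, Fin.prod_Ioi_eq_prod_Ico, Fin.prod_Iio_eq_prod_range, Fin.prod_Ioo_eq_prod_Ico]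

def loopMatrix (m : ℕ) : Matrix (Fin (m + 1)) (Fin (m + 1)) R :=
  diagonal (fun i : Fin (m + 1) => a i) + (finRotate (m + 1)).toPEquiv.toMatrix

theorem loopMatrix_mul_apply {m : ℕ} (B : Matrix (Fin (m + 1)) (Fin (m + 1)) R)
    (i j : Fin (m + 1)) :
    (loopMatrix a m * B) i j = a i * B i j + B (finRotate (m + 1) i) j := by
  rw [loopMatrix, add_mul, PEquiv.toMatrix_toPEquiv_mul, Matrix.add_apply, diagonal_mul,
    submatrix_apply, id]

theorem loopMatrix_apply {m : ℕ} (hm : 1 ≤ m) (i j : Fin (m + 1)) :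
    loopMatrix a m i j = if i = j then a i else if (i : ℕ) + 1 = j then 1
      else if (i : ℕ) = m + 1 - 1 ∧ (j : ℕ) = 0 then 1 else 0 := by
  have hval : (finRotate (m + 1) i : ℕ) = if (i : ℕ) = m then 0 else (i : ℕ) + 1 := by
    rw [coe_finRotate]
    exact if_congr Fin.ext_iff rfl rfl
  have hfix : finRotate (m + 1) i ≠ i := by
    rw [Ne, Fin.ext_iff, hval]
    split_ifs <;> omega
  have hsucc :
      finRotate (m + 1) i = j ↔ (i : ℕ) + 1 = j ∨ ((i : ℕ) = m + 1 - 1 ∧ (j : ℕ) = 0) := by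
    rw [Fin.ext_iff, hval]
    split_ifs <;> omega
  simp only [loopMatrix, Matrix.add_apply, diagonal_apply, PEquiv.toMatrix_apply,
    Equiv.toPEquiv_apply, Option.mem_def, Option.some_inj]
  by_cases hij : i = j
  · subst hij
    rw [if_pos rfl, if_pos rfl, if_neg hfix, add_zero]
  · rw [if_neg hij, if_neg hij, zero_add, if_congr hsucc rfl rfl]
    split_ifs <;> simp_all

theorem loopMatrix_mul_invNum (m : ℕ) :
    loopMatrix a m * of (fun i j : Fin (m + 1) => invNum (m + 1) a i j) =
      denom (m + 1) a • 1 := by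
  ext i j
  rw [loopMatrix_mul_apply, Matrix.smul_apply, one_apply, smul_ite, smul_zero, smul_eq_mul,
    mul_one, of_apply, of_apply]
  by_cases hi : i = Fin.last m
  · subst hi
    rw [finRotate_last, Fin.val_last, Fin.val_zero, mul_invNum_add_invNum_zero a (Fin.is_le j)]
    simp [Fin.ext_iff]
  · rw [coe_finRotate_of_ne_last hi,
      mul_invNum_add_invNum_succ a (Nat.succ_lt_succ (Fin.val_lt_last hi)) j.isLt]
    simp [Fin.ext_iff]

end CommRing

theorem denom_ne_zero {R : Type*} [CommRing R] [LinearOrder R] [IsStrictOrderedRing R]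
    {n : ℕ} {a : ℕ → R} (hn : 1 ≤ n) (ha : ∀ i < n, 2 ≤ a i) : denom n a ≠ 0 := by
  have hprod : (2 : R) ≤ ∏ k ∈ range n, a k :=
    calc (2 : R) ≤ 2 ^ n := le_self_pow₀ one_le_two (by omega)
      _ = ∏ _k ∈ range n, 2 := by rw [prod_const, card_range]
      _ ≤ ∏ k ∈ range n, a k :=
        prod_le_prod (fun _ _ => zero_le_two) fun k hk => ha k (mem_range.mp hk)
  unfold denom
  rcases neg_one_pow_eq_or R (n + 1) with h | h <;> rw [h] <;> intro h0 <;> linarith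

end LoopExponentMatrix

open LoopExponentMatrix in
/-- Indices are `0`-based: `i : Fin n` is the index `i + 1` of the informal statement. -/
theorem loop_exponent_matrix_inverse {n : ℕ} (hn : 2 ≤ n) (a : ℕ → ℕ)
    (ha : ∀ i < n, 2 ≤ a i)
    (E : Matrix (Fin n) (Fin n) ℚ)
    (hE : ∀ i j : Fin n, E i j =
      if i = j then (a i : ℚ)
      else if (i : ℕ) + 1 = (j : ℕ) then 1
      else if (i : ℕ) = n - 1 ∧ (j : ℕ) = 0 then 1 else 0)
    (D : ℚ) (hD : D = (∏ k : Fin n, (a k : ℚ)) + (-1) ^ (n + 1)) :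
    IsUnit E ∧ ∀ i j : Fin n, E⁻¹ i j =
      if (i : ℕ) ≤ (j : ℕ) then
        (-1 : ℚ) ^ ((j : ℕ) - (i : ℕ)) *
          ((∏ k ∈ Finset.Ioi j, (a k : ℚ)) * ∏ k ∈ Finset.Iio i, (a k : ℚ)) / D
      else
        (-1 : ℚ) ^ (n + (j : ℕ) - (i : ℕ)) * (∏ k ∈ Finset.Ioo j i, (a k : ℚ)) / D := by
  obtain ⟨m, rfl⟩ : ∃ m, n = m + 1 := ⟨n - 1, by omega⟩
  set q : ℕ → ℚ := fun k => a k
  have hEq : E = loopMatrix q m := by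
    ext i j
    rw [hE, loopMatrix_apply q (by omega)]
  have hDq : D = denom (m + 1) q := by
    rw [hD, denom, ← Fin.prod_univ_eq_prod_range]
  have hD0 : D ≠ 0 := hDq ▸ denom_ne_zero (by omega) fun i hi => Nat.ofNat_le_cast.mpr (ha i hi)
  have hright : E * (D⁻¹ • of fun i j : Fin (m + 1) => invNum (m + 1) q i j) = 1 := by
    rw [mul_smul_comm, hEq, loopMatrix_mul_invNum, ← hDq, smul_smul, inv_mul_cancel₀ hD0, one_smul]
  refine ⟨(isUnit_iff_isUnit_det E).mpr (isUnit_det_of_right_inverse hright), fun i j => ?_⟩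
  rw [inv_eq_right_inv hright, Matrix.smul_apply, of_apply, invNum_val, smul_eq_mul]
  split_ifs <;> ring
end

section
/- Let n ≥ 2 and let a_1, …, a_n be integers with a_i ≥ 2. Set D = ∏_{k=1}^{n} a_k + (−1)^{n+1} and define, for 1 ≤ i ≤ n, q_i = ( Σ_{j=i}^{n} (−1)^{j−i} (∏_{k=j+1}^{n} a_k)(∏_{k=1}^{i−1} a_k) + Σ_{j=1}^{i−1} (−1)^{n+j−i} ∏_{k=j+1}^{i−1} a_k ) / D, where empty products equal 1, and set q_{n+1} = q_1. Then a_i q_i = 1 − q_{i+1} for every 1 ≤ i ≤ n. -/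
/-! Multiplying the numerator of `q_i` by `a_i` turns each term of its two sums into the
corresponding term of the numerator of `q_{i+1}` with the opposite sign, except the leading term
of the first sum, which becomes `∏ a_k`, while the numerator of `q_{i+1}` gains the extra term
`(-1)^(n-1)` in its second sum; these two make up `D`. The wrap-around `q_{n+1} = q_1` holds
because the first sum at `i = 0` is the second sum at `i = n`. -/

open Finset

namespace LoopWeight

variable {R : Type*} [CommRing R] (a : ℕ → R) (n : ℕ)

/-- The numerator of `q_i` is `head a n i + tail a n i`, the two sums of the formula, with
0-based indices. -/
def head (i : ℕ) : R :=
  ∑ j ∈ Ico i n, (-1) ^ (j - i) * ((∏ k ∈ Ico (j + 1) n, a k) * ∏ k ∈ range i, a k)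

def tail (i : ℕ) : R :=
  ∑ j ∈ range i, (-1) ^ (n + j - i) * ∏ k ∈ Ico (j + 1) i, a k

def numerator (i : ℕ) : R := head a n i + tail a n i

variable {a n}

theorem mul_head {i : ℕ} (hi : i < n) :
    a i * head a n i = ∏ k ∈ range n, a k - head a n (i + 1) := by
  have hdiag : a i * ((∏ k ∈ Ico (i + 1) n, a k) * ∏ k ∈ range i, a k) = ∏ k ∈ range n, a k := by
    rw [← prod_range_mul_prod_Ico a hi, prod_range_succ]
    ring
  have hshift : a i * ∑ j ∈ Ico (i + 1) n, (-1) ^ (j - i) *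
        ((∏ k ∈ Ico (j + 1) n, a k) * ∏ k ∈ range i, a k) = -head a n (i + 1) := by
    rw [head, mul_sum, ← sum_neg_distrib]
    refine sum_congr rfl fun j hj => ?_
    rw [mem_Ico] at hj
    rw [show j - i = j - (i + 1) + 1 by omega, pow_succ, prod_range_succ]
    ring
  rw [head, sum_eq_sum_Ico_succ_bot hi, mul_add, Nat.sub_self, pow_zero, one_mul, hdiag, hshift,
    sub_eq_add_neg]

theorem mul_tail {i : ℕ} (hi : i < n) :
    a i * tail a n i = (-1) ^ (n + 1) - tail a n (i + 1) := by
  have hshift : a i * tail a n i =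
      -∑ j ∈ range i, (-1) ^ (n + j - (i + 1)) * ∏ k ∈ Ico (j + 1) (i + 1), a k := by
    rw [tail, mul_sum, ← sum_neg_distrib]
    refine sum_congr rfl fun j hj => ?_
    rw [mem_range] at hj
    rw [show n + j - i = n + j - (i + 1) + 1 by omega, pow_succ,
      prod_Ico_succ_top (show j + 1 ≤ i by omega)]
    ring
  have hlast : (-1 : R) ^ (n + i - (i + 1)) = (-1) ^ (n + 1) := by
    rw [show n + 1 = n + i - (i + 1) + 2 by omega, pow_add]
    ring
  rw [hshift, tail, sum_range_succ, hlast, Ico_self, prod_empty, mul_one]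
  ring

theorem numerator_self : numerator a n n = numerator a n 0 := by
  simp only [numerator, head, tail, Ico_self, sum_empty, prod_empty, mul_one,
    Nat.sub_zero, Nat.add_sub_cancel_left, zero_add, add_zero, range_eq_Ico]

theorem mul_numerator {i : ℕ} (hi : i < n) :
    a i * numerator a n i = (∏ k ∈ range n, a k + (-1) ^ (n + 1)) - numerator a n (i + 1) := by
  rw [numerator, mul_add, mul_head hi, mul_tail hi, numerator]
  ring

theorem mul_numerator_mod {i : ℕ} (hi : i < n) :
    a i * numerator a n i =
      (∏ k ∈ range n, a k + (-1) ^ (n + 1)) - numerator a n ((i + 1) % n) := by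
  obtain h | h : i + 1 < n ∨ i + 1 = n := by omega
  · rw [Nat.mod_eq_of_lt h, mul_numerator hi]
  · rw [mul_numerator hi, h, Nat.mod_self, numerator_self]

end LoopWeight

theorem prod_add_neg_one_pow_pos {R : Type*} [CommRing R] [LinearOrder R] [IsStrictOrderedRing R]
    {a : ℕ → R} {n : ℕ} (hn : 0 < n) (ha : ∀ i < n, 2 ≤ a i) :
    0 < ∏ k ∈ range n, a k + (-1) ^ (n + 1) := by
  have hprod : 2 ^ n ≤ ∏ k ∈ range n, a k := by
    simpa using prod_le_prod (s := range n) (f := fun _ => (2 : R)) (fun _ _ => zero_le_two)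
      fun k hk => ha k (mem_range.mp hk)
  have htwo : (2 : R) ≤ 2 ^ n := by
    simpa using pow_le_pow_right₀ (by norm_num : (1 : R) ≤ 2) hn
  rcases neg_one_pow_eq_or R (n + 1) with h | h <;> rw [h] <;> linarith

theorem loop_weights_recursion_general {n : ℕ} (a : ℕ → ℕ)
    (ha : ∀ i < n, 2 ≤ a i)
    (D : ℚ) (hD : D = (∏ k ∈ Finset.range n, (a k : ℚ)) + (-1) ^ (n + 1))
    (q : ℕ → ℚ)
    (hq : ∀ i < n, q i =
      ((∑ j ∈ Finset.Ico i n, (-1 : ℚ) ^ (j - i) *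
          ((∏ k ∈ Finset.Ico (j + 1) n, (a k : ℚ)) * ∏ k ∈ Finset.range i, (a k : ℚ))) +
        ∑ j ∈ Finset.range i, (-1 : ℚ) ^ (n + j - i) *
          ∏ k ∈ Finset.Ico (j + 1) i, (a k : ℚ)) / D) :
    ∀ i < n, (a i : ℚ) * q i = 1 - q ((i + 1) % n) := by
  intro i hi
  have hq_numerator : ∀ i < n, q i = LoopWeight.numerator (fun k => (a k : ℚ)) n i / D := hq
  have hD0 : D ≠ 0 := by
    rw [hD]
    exact (prod_add_neg_one_pow_pos (by omega) fun k hk => by exact_mod_cast ha k hk).ne'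
  have key := LoopWeight.mul_numerator_mod (a := fun k => (a k : ℚ)) hi
  rw [← hD] at key
  rw [hq_numerator i hi, hq_numerator _ (Nat.mod_lt _ (by omega)), ← mul_div_assoc, key, sub_div, div_self hD0]

/-- The loop weights
`q_i = (∑_{j=i}^{n} (−1)^{j−i} (∏_{k=j+1}^{n} a_k)(∏_{k=1}^{i−1} a_k)
      + ∑_{j=1}^{i−1} (−1)^{n+j−i} ∏_{k=j+1}^{i−1} a_k)/D`
with `D = ∏ a_k + (−1)^{n+1}` satisfy `a_i q_i = 1 − q_{i+1}`, where `q_{n+1} = q_1`.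
Indices are `0`-based: `q i` is defined for `i < n` and the cyclic successor is
`(i+1) % n`. -/
theorem loop_weights_recursion {n : ℕ} (hn : 2 ≤ n) (a : ℕ → ℕ)
    (ha : ∀ i < n, 2 ≤ a i)
    (D : ℚ) (hD : D = (∏ k ∈ Finset.range n, (a k : ℚ)) + (-1) ^ (n + 1))
    (q : ℕ → ℚ)
    (hq : ∀ i < n, q i =
      ((∑ j ∈ Finset.Ico i n, (-1 : ℚ) ^ (j - i) *
          ((∏ k ∈ Finset.Ico (j + 1) n, (a k : ℚ)) * ∏ k ∈ Finset.range i, (a k : ℚ))) +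
        ∑ j ∈ Finset.range i, (-1 : ℚ) ^ (n + j - i) *
          ∏ k ∈ Finset.Ico (j + 1) i, (a k : ℚ)) / D) :
    ∀ i < n, (a i : ℚ) * q i = 1 - q ((i + 1) % n) :=
  loop_weights_recursion_general a ha D hD q hq
end

section
/- Let n ≥ 2 and let a_1, …, a_n be integers with a_i ≥ 2, and let w = Σ_{i=1}^{n−1} x_i^{a_i} x_{i+1} + x_n^{a_n} x_1 ∈ ℂ[x_1, …, x_n] be the loop polynomial. Then the group G_w = { γ ∈ (ℂ^×)^n : w(γ_1 x_1, …, γ_n x_n) = w(x_1, …, x_n) } of diagonal symmetries of w (equivalently, the set of γ with γ_i^{a_i} γ_{i+1} = 1 for 1 ≤ i ≤ n−1 and γ_n^{a_n} γ_1 = 1) is finite of cardinality ∏_{j=1}^{n} a_j + (−1)^{n+1}. -/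
/-!
Scaling `x_i ↦ γ_i x_i` multiplies each monomial `x^m` by `γ^m`, and the monomials
`x_i^{a_i} x_{i+1}` of `w` are pairwise distinct because `a_i ≥ 2`; so `γ` is a symmetry iff
`γ_i^{a_i} γ_{i+1} = 1` for all `i`. Going around the loop, these relations force
`γ_k = γ_0^{e_k}` with `e_k = (-1)^k a_0 ⋯ a_{k-1}`, and the closing relation becomes
`γ_0^{e_n - 1} = 1`; conversely every such `γ_0` extends to a solution. Hence `G_w` is in
bijection with the `|e_n - 1|`-th roots of unity, and `|e_n - 1| = ∏ a_j + (-1)^{n+1}`.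
-/

open MvPolynomial
open Fin.NatCast

section DiagonalSymmetry

variable {R ι : Type*} [CommSemiring R] [DecidableEq ι]

theorem injective_single_add_single_one {b : ι → ℕ} (hb : ∀ i, 2 ≤ b i) (s : ι → ι) :
    Function.Injective fun i => Finsupp.single i (b i) + Finsupp.single (s i) 1 := by
  intro i j hij
  by_contra hne
  have hi := DFunLike.congr_fun hij i
  simp only [Finsupp.add_apply, Finsupp.single_eq_same, Finsupp.single_apply, if_neg (Ne.symm hne)]
    at hi
  have := hb i
  split_ifs at hi <;> omega

variable [Fintype ι]

theorem MvPolynomial.sum_monomial_eq_sum_monomial_iff {d : ι → ι →₀ ℕ}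
    (hd : Function.Injective d) (c c' : ι → R) :
    ∑ i, monomial (d i) (c i) = ∑ i, monomial (d i) (c' i) ↔ ∀ i, c i = c' i := by
  refine ⟨fun h i => ?_, fun h => by simp only [h]⟩
  simpa [coeff_sum, coeff_monomial, hd.eq_iff] using congrArg (coeff (d i)) h

theorem aeval_C_mul_X_sum_X_pow_mul_X_eq_self_iff {b : ι → ℕ} (hb : ∀ i, 2 ≤ b i) (s : ι → ι) (γ : ι → R) :
    aeval (fun i => C (γ i) * X i) (∑ i, X i ^ b i * X (s i) : MvPolynomial ι R) =
        ∑ i, X i ^ b i * X (s i) ↔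
      ∀ i, γ i ^ b i * γ (s i) = 1 := by
  have hmon : ∀ i, (X i ^ b i * X (s i) : MvPolynomial ι R) =
      monomial (Finsupp.single i (b i) + Finsupp.single (s i) 1) 1 := by
    intro i
    rw [X_pow_eq_monomial, X, monomial_mul, one_mul]
  have himage : ∀ i, aeval (fun i => C (γ i) * X i) (X i ^ b i * X (s i) : MvPolynomial ι R) =
      monomial (Finsupp.single i (b i) + Finsupp.single (s i) 1) (γ i ^ b i * γ (s i)) := by
    intro i
    rw [← mul_one (γ i ^ b i * γ (s i)), ← C_mul_monomial, ← hmon]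
    simp only [map_mul, map_pow, aeval_X]
    ring
  simp only [map_sum, himage]
  simp only [hmon]
  exact sum_monomial_eq_sum_monomial_iff (injective_single_add_single_one hb s) _ _

end DiagonalSymmetry

def loopExponent (a : ℕ → ℕ) (k : ℕ) : ℤ :=
  (-1) ^ k * ∏ j ∈ Finset.range k, (a j : ℤ)

@[simp]
theorem loopExponent_zero (a : ℕ → ℕ) : loopExponent a 0 = 1 := by simp [loopExponent]

theorem loopExponent_succ (a : ℕ → ℕ) (k : ℕ) :
    loopExponent a (k + 1) = -(a k : ℤ) * loopExponent a k := by
  simp only [loopExponent, Finset.prod_range_succ, pow_succ]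
  ring

theorem sub_one_le_add_neg_one_pow (x : ℤ) (k : ℕ) : x - 1 ≤ x + (-1) ^ k := by
  rcases neg_one_pow_eq_or ℤ k with h | h <;> rw [h] <;> omega

theorem natAbs_loopExponent_sub_one {a : ℕ → ℕ} {n : ℕ}
    (hP : 0 < ∏ j ∈ Finset.range n, (a j : ℤ)) :
    ((loopExponent a n - 1).natAbs : ℤ) = (∏ j ∈ Finset.range n, (a j : ℤ)) + (-1) ^ (n + 1) := by
  have hfactor : loopExponent a n - 1 =
      (-1) ^ n * ((∏ j ∈ Finset.range n, (a j : ℤ)) + (-1) ^ (n + 1)) := by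
    rw [loopExponent, pow_succ, mul_add, ← mul_assoc, ← pow_add, Even.neg_one_pow ⟨n, rfl⟩]
    ring
  have hnonneg : 0 ≤ (∏ j ∈ Finset.range n, (a j : ℤ)) + (-1) ^ (n + 1) := by
    linarith [sub_one_le_add_neg_one_pow (∏ j ∈ Finset.range n, (a j : ℤ)) (n + 1)]
  rw [Int.natCast_natAbs, hfactor, abs_mul, abs_pow, abs_neg, abs_one, one_pow, one_mul,
    abs_of_nonneg hnonneg]

section LoopRelations

variable {G : Type*} [CommGroup G] {n : ℕ} [NeZero n] {a : ℕ → ℕ}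

theorem eq_zpow_loopExponent {γ : Fin n → G} (hγ : ∀ i : Fin n, γ i ^ a i * γ (i + 1) = 1) :
    ∀ k ≤ n, γ k = γ 0 ^ loopExponent a k
  | 0, _ => by simp
  | k + 1, hk => by
    have hrel := hγ k
    rw [Fin.val_cast_of_lt hk, eq_zpow_loopExponent hγ k (by omega)] at hrel
    rw [Nat.cast_succ, eq_inv_of_mul_eq_one_right hrel, loopExponent_succ, ← zpow_natCast,
      ← zpow_mul, ← zpow_neg, neg_mul, mul_comm]

theorem zpow_loopExponent_sub_one {γ : Fin n → G}
    (hγ : ∀ i : Fin n, γ i ^ a i * γ (i + 1) = 1) : γ 0 ^ (loopExponent a n - 1) = 1 := by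
  have h := eq_zpow_loopExponent hγ n le_rfl
  rw [Fin.natCast_self] at h
  rw [zpow_sub_one, ← h, mul_inv_cancel]

theorem zpow_loopExponent_pow_mul_eq_one {ζ : G} (hζ : ζ ^ (loopExponent a n - 1) = 1) (i : Fin n) :
    (ζ ^ loopExponent a i) ^ a i * ζ ^ loopExponent a (i + 1 : Fin n) = 1 := by
  rw [← zpow_natCast, ← zpow_mul, ← zpow_add]
  rcases (show (i : ℕ) + 1 ≤ n from i.isLt).lt_or_eq with hlt | hlast
  · rw [Fin.val_add_one_of_lt' hlt, loopExponent_succ, show loopExponent a i * a i + -(a i : ℤ) * loopExponent a i = 0 by ring, zpow_zero]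
  · have hwrap : (i + 1 : Fin n) = 0 := by
      rw [← Fin.cast_val_eq_self i, ← Nat.cast_add_one, hlast, Fin.natCast_self]
    have hexp : loopExponent a i * a i + loopExponent a (i + 1 : Fin n) =
        -(loopExponent a n - 1) := by
      have hsucc := loopExponent_succ a i
      rw [hlast] at hsucc
      rw [hwrap, Fin.val_zero, loopExponent_zero, hsucc]
      ring
    rw [hexp, zpow_neg, hζ, inv_one]

variable (G a n) in
def loopSolutionsEquiv :
    {γ : Fin n → G | ∀ i : Fin n, γ i ^ a i * γ (i + 1) = 1} ≃
      {ζ : G // ζ ^ (loopExponent a n - 1) = 1} where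
  toFun γ := ⟨γ.1 0, zpow_loopExponent_sub_one γ.2⟩
  invFun ζ := ⟨fun i => ζ.1 ^ loopExponent a i, zpow_loopExponent_pow_mul_eq_one ζ.2⟩
  left_inv γ := Subtype.ext <| funext fun i => by
    simpa only [Fin.cast_val_eq_self] using (eq_zpow_loopExponent γ.2 i i.isLt.le).symm
  right_inv ζ := Subtype.ext (by simp)

end LoopRelations

theorem Complex.card_units_zpow_eq_one {m : ℤ} (hm : m ≠ 0) :
    Nat.card {ζ : ℂˣ // ζ ^ m = 1} = m.natAbs := by
  have : NeZero m.natAbs := ⟨Int.natAbs_ne_zero.mpr hm⟩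
  rw [← Complex.card_rootsOfUnity m.natAbs]
  exact Nat.card_congr <| Equiv.subtypeEquivRight fun ζ => by
    rw [_root_.mem_rootsOfUnity, pow_natAbs_eq_one]

theorem loop_diagonal_symmetry_group_card_general {n : ℕ} [NeZero n]
    (a : ℕ → ℕ) (ha : ∀ i < n, 2 ≤ a i)
    (w : MvPolynomial (Fin n) ℂ)
    (hw : w = ∑ i : Fin n, X i ^ a (i : ℕ) * X (i + 1))
    (G : Set (Fin n → ℂˣ))
    (hG : G = {γ | MvPolynomial.aeval
        (fun i => MvPolynomial.C ((γ i : ℂ)) * X i) w = w}) :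
    G = {γ | ∀ i : Fin n, γ i ^ a (i : ℕ) * γ (i + 1) = 1} ∧
      G.Finite ∧
      (G.ncard : ℤ) = (∏ j ∈ Finset.range n, (a j : ℤ)) + (-1) ^ (n + 1) := by
  have hsym : G = {γ | ∀ i : Fin n, γ i ^ a (i : ℕ) * γ (i + 1) = 1} := by
    subst hG hw
    ext γ
    rw [Set.mem_ofPred_eq, aeval_C_mul_X_sum_X_pow_mul_X_eq_self_iff (b := fun i : Fin n => a i)
      (fun i => ha i i.isLt) (· + 1)]
    simp only [Set.mem_ofPred_eq, Units.ext_iff, Units.val_mul, Units.val_pow_eq_pow_val,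
      Units.val_one]
  have hprod : 2 ≤ ∏ j ∈ Finset.range n, a j :=
    calc 2 ≤ 2 ^ n := le_self_pow₀ (by norm_num) (NeZero.ne n)
      _ ≤ _ := by
        simpa using Finset.pow_card_le_prod (Finset.range n) a 2
          fun j hj => ha j (Finset.mem_range.mp hj)
  zify at hprod
  have hcount := natAbs_loopExponent_sub_one (a := a) (n := n) (by omega)
  have hpos : 0 < (∏ j ∈ Finset.range n, (a j : ℤ)) + (-1) ^ (n + 1) := by
    linarith [sub_one_le_add_neg_one_pow (∏ j ∈ Finset.range n, (a j : ℤ)) (n + 1)]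
  have hcard : (G.ncard : ℤ) = (∏ j ∈ Finset.range n, (a j : ℤ)) + (-1) ^ (n + 1) := by
    rw [hsym, ← Nat.card_coe_set_eq, Nat.card_congr (loopSolutionsEquiv ℂˣ n a),
      Complex.card_units_zpow_eq_one (by omega), hcount]
  exact ⟨hsym, Set.finite_of_ncard_pos (by exact_mod_cast hcard ▸ hpos), hcard⟩

/-- The group of diagonal symmetries of the loop polynomial
`w = ∑_{i=1}^{n−1} x_i^{a_i} x_{i+1} + x_n^{a_n} x_1` (equivalently, the set of
`γ ∈ (ℂ^×)^n` with `γ_i^{a_i} γ_{i+1} = 1` cyclically) is finite of cardinality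
`∏_{j=1}^{n} a_j + (−1)^{n+1}`. Indices are `0`-based via `Fin n`, with cyclic
successor `i + 1` in `Fin n`. -/
theorem loop_diagonal_symmetry_group_card {n : ℕ} [NeZero n] (hn : 2 ≤ n)
    (a : ℕ → ℕ) (ha : ∀ i < n, 2 ≤ a i)
    (w : MvPolynomial (Fin n) ℂ)
    (hw : w = ∑ i : Fin n, X i ^ a (i : ℕ) * X (i + 1))
    (G : Set (Fin n → ℂˣ))
    (hG : G = {γ | MvPolynomial.aeval
        (fun i => MvPolynomial.C ((γ i : ℂ)) * X i) w = w}) :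
    G = {γ | ∀ i : Fin n, γ i ^ a (i : ℕ) * γ (i + 1) = 1} ∧
      G.Finite ∧
      (G.ncard : ℤ) = (∏ j ∈ Finset.range n, (a j : ℤ)) + (-1) ^ (n + 1) :=
  loop_diagonal_symmetry_group_card_general a ha w hw G hG
end

section
/- Let n ≥ 2 and let a_1, …, a_n be integers with a_i ≥ 2, and let w = x_n x_1^{a_1} + Σ_{i=2}^{n} x_{i−1} x_i^{a_i} ∈ ℂ[x_1, …, x_n] (the Berglund–Hübsch dual of the loop polynomial). Then the Milnor ring Q_w = ℂ[x_1, …, x_n]/(∂w/∂x_1, …, ∂w/∂x_n) is a finite-dimensional ℂ-vector space of dimension μ_w = ∏_{j=1}^{n} a_j. -/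
/-!
Modulo the Jacobian ideal, `∂w/∂x_{k-1} = x_k^{a_k} + a_{k-1} x_{k-2} x_{k-1}^{a_{k-1}-1}` lets one
rewrite `x_k^{a_k}` as `-a_{k-1} x_{k-2} x_{k-1}^{a_{k-1}-1}`. Rewrites at different positions
commute, so a monomial that can be rewritten into a reduced monomial `x^v` (all `v_k < a_k`) has a
unique normal form `c x^v`, and taking normal forms is a linear map that kills the Jacobian ideal.
A monomial without normal form can be rewritten forever; rewriting preserves the quasi-homogeneous
degree, so the chain cycles, and since every step contributes a factor `-a_{k-1}` with
`a_{k-1} ≥ 2`, a monomial on the cycle equals a multiple `C ≠ 1` of itself in the Milnor ring.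
Hence it vanishes there, and so does the monomial we started from. So the `∏ a_j` reduced
monomials form a basis of the Milnor ring.
-/

open MvPolynomial

theorem IsAddTorsionFree.eq_zero_of_forall_exists_eq_zsmul {α V : Type*} [Finite α]
    [AddCommGroup V] [IsAddTorsionFree V] (y : α → V)
    (h : ∀ a, ∃ b, ∃ c : ℤ, 2 ≤ |c| ∧ y a = c • y b) (a : α) : y a = 0 := by
  choose f c hc hy using h
  have orbit : ∀ m a, ∃ C : ℤ, 2 ^ m ≤ |C| ∧ y a = C • y (f^[m] a) := by
    intro m
    induction m with
    | zero => exact fun a => ⟨1, by simp, by simp⟩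
    | succ m ih =>
      intro a
      obtain ⟨C, hC, hyC⟩ := ih (f a)
      refine ⟨c a * C, ?_, ?_⟩
      · rw [abs_mul, pow_succ']
        exact mul_le_mul (hc a) hC (by positivity) (abs_nonneg _)
      · rw [hy a, hyC, Function.iterate_succ_apply, mul_smul]
  obtain ⟨i, j, hij, hfij⟩ := Finite.exists_ne_map_eq_of_infinite fun m => f^[m] a
  wlog hlt : i < j generalizing i j
  · exact this j i hij.symm hfij.symm (hij.lt_or_gt.resolve_left hlt)
  have periodic : y (f^[i] a) = 0 := by
    obtain ⟨C, hC, hyC⟩ := orbit (j - i) (f^[i] a)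
    rw [← Function.iterate_add_apply, Nat.sub_add_cancel hlt.le, ← hfij] at hyC
    have h2 : (2 : ℤ) ≤ |C| := (le_self_pow₀ (by norm_num) (by omega)).trans hC
    have hC1 : C - 1 ≠ 0 := sub_ne_zero.mpr (by rintro rfl; norm_num at h2)
    have : (C - 1) • y (f^[i] a) = 0 := by rw [sub_smul, one_smul, ← hyC, sub_self]
    exact (smul_eq_zero.mp this).resolve_left hC1
  obtain ⟨C, -, hyC⟩ := orbit i a
  rw [hyC, periodic, smul_zero]

open Fin.NatCast in
theorem Fin.prod_range_add_eq_prod_univ {n : ℕ} [NeZero n] {M : Type*} [CommMonoid M]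
    (f : Fin n → M) (j : Fin n) : ∏ s ∈ Finset.range n, f (j + s) = ∏ i, f i := by
  rw [← Fin.prod_univ_eq_prod_range (fun s => f (j + s))]
  simp only [Fin.cast_val_eq_self]
  exact Fintype.prod_equiv (Equiv.addLeft j) _ _ fun _ => rfl

noncomputable def MvPolynomial.jacobianIdeal {σ R : Type*} [CommSemiring R] (f : MvPolynomial σ R) :
    Ideal (MvPolynomial σ R) :=
  Ideal.span (Set.range fun i => pderiv i f)

theorem MvPolynomial.monomial_eq_smul_monomial_one {σ R : Type*} [CommSemiring R] (s : σ →₀ ℕ)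
    (a : R) : monomial s a = a • monomial s 1 := by
  rw [smul_monomial, smul_eq_mul, mul_one]

namespace DualLoop

noncomputable section

section Reduced

variable {n : ℕ} (A : Fin n → ℕ)

abbrev Reduced := {v : Fin n →₀ ℕ // ∀ k, v k < A k}

def reducedEquivPi : Reduced A ≃ ∀ k, Fin (A k) :=
  (Finsupp.equivFunOnFinite.subtypeEquiv fun _ => Iff.rfl).trans <|
    Equiv.subtypePiEquivPi.trans <| .piCongrRight fun _ => Fin.equivSubtype.symm

instance : Fintype (Reduced A) := .ofEquiv _ (reducedEquivPi A).symm

theorem card_reduced : Fintype.card (Reduced A) = ∏ k, A k := by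
  simp [Fintype.card_congr (reducedEquivPi A)]

end Reduced

variable {n : ℕ} [NeZero n] (R K : Type*) [CommRing R] [Field K] (A : Fin n → ℕ)

section Weights

open Fin.NatCast

/-- Unwinds the relations `q_j + a_{j+1} q_{j+1} = 1` of the quasi-homogeneous weights `q` of `w`
around the cycle: `altWeight A (n - 1)` is a positive integer multiple of `q`. -/
def altWeight : ℕ → Fin n → ℤ
  | 0, _ => 1
  | m + 1, j => A (j + 1) * altWeight m (j + 1) + (-1) ^ (m + 1)

theorem one_le_altWeight (hA : ∀ i, 2 ≤ A i) (m : ℕ) (j : Fin n) : 1 ≤ altWeight A m j := by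
  induction m generalizing j with
  | zero => simp [altWeight]
  | succ m ih =>
    have h2 : (2 : ℤ) ≤ A (j + 1) := by exact_mod_cast hA _
    have := ih (j + 1)
    have : -1 ≤ (-1 : ℤ) ^ (m + 1) := by rcases neg_one_pow_eq_or ℤ (m + 1) with h | h <;> simp [h]
    simp only [altWeight]
    nlinarith

theorem altWeight_add_altWeight_succ (m : ℕ) (j : Fin n) :
    altWeight A m j + altWeight A (m + 1) j = ∏ s ∈ Finset.range (m + 1), (A (j + 1 + s) : ℤ) := by
  induction m generalizing j with
  | zero => simp [altWeight]
  | succ m ih =>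
    rw [Finset.prod_range_succ', Nat.cast_zero, add_zero, mul_comm]
    simp only [Nat.cast_succ, ← add_assoc, add_right_comm _ _ (1 : Fin n)]
    rw [← ih, altWeight, altWeight]
    ring

theorem exists_quasiHomogeneous_weight (hA : ∀ i, 2 ≤ A i) :
    ∃ w : Fin n → ℕ, (∀ j, w j ≠ 0) ∧ ∃ D, ∀ j, w j + A (j + 1) * w (j + 1) = D := by
  refine ⟨fun j => (altWeight A (n - 1) j).toNat, fun j => ?_,
    (∏ i, (A i : ℤ) - (-1) ^ n).toNat, fun j => ?_⟩
  · have := one_le_altWeight A hA (n - 1) j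
    simp only [ne_eq, Int.toNat_eq_zero, not_le]
    omega
  · have hsum := altWeight_add_altWeight_succ A (n - 1) j
    rw [Nat.sub_add_cancel NeZero.one_le, Fin.prod_range_add_eq_prod_univ (fun i => (A i : ℤ))]
      at hsum
    have hsucc : altWeight A n j = A (j + 1) * altWeight A (n - 1) (j + 1) + (-1) ^ n := by
      obtain ⟨m, rfl⟩ : ∃ m, n = m + 1 := Nat.exists_eq_succ_of_ne_zero (NeZero.ne n)
      rfl
    have h1 := one_le_altWeight A hA (n - 1) j
    have h2 := one_le_altWeight A hA (n - 1) (j + 1)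
    apply Nat.cast_injective (R := ℤ)
    push_cast
    rw [Int.toNat_of_nonneg (by omega), Int.toNat_of_nonneg (by omega),
      Int.toNat_of_nonneg (by nlinarith)]
    linarith

end Weights

/-- Replaces `x_k^{a_k}` by `x_{k-2} x_{k-1}^{a_{k-1}-1}` in `x^u`; only meaningful when
`a_k ≤ u_k`. -/
def rewrite (k : Fin n) (u : Fin n →₀ ℕ) : Fin n →₀ ℕ :=
  u - Finsupp.single k (A k) +
    (Finsupp.single (k - 1 - 1) 1 + Finsupp.single (k - 1) (A (k - 1) - 1))

variable {A}

theorem rewrite_apply (k : Fin n) (u : Fin n →₀ ℕ) (i : Fin n) :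
    rewrite A k u i = u i - (if k = i then A k else 0) +
      ((if k - 1 - 1 = i then 1 else 0) + (if k - 1 = i then A (k - 1) - 1 else 0)) := by
  simp only [rewrite, Finsupp.add_apply, Finsupp.tsub_apply, Finsupp.single_apply]

theorem le_rewrite_apply {k k' : Fin n} {u : Fin n →₀ ℕ} (hne : k ≠ k') (h : A k' ≤ u k') :
    A k' ≤ rewrite A k u k' := by
  rw [rewrite_apply, if_neg hne]
  omega

theorem rewrite_comm {k k' : Fin n} {u : Fin n →₀ ℕ} (hne : k ≠ k') (hk : A k ≤ u k)
    (hk' : A k' ≤ u k') : rewrite A k (rewrite A k' u) = rewrite A k' (rewrite A k u) := by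
  ext i
  simp only [rewrite_apply]
  split_ifs <;> simp_all <;> omega

theorem weight_rewrite (hA : ∀ i, 1 ≤ A i) {w : Fin n → ℕ} {D : ℕ}
    (hw : ∀ j, w j + A (j + 1) * w (j + 1) = D) {k : Fin n} {u : Fin n →₀ ℕ} (hk : A k ≤ u k) :
    Finsupp.weight w (rewrite A k u) = Finsupp.weight w u := by
  have hsplit : Finsupp.weight w (u - Finsupp.single k (A k)) + A k * w k = Finsupp.weight w u := by
    rw [← smul_eq_mul, ← Finsupp.weight_single, ← map_add,
      tsub_add_cancel_of_le (Finsupp.single_le_iff.mpr hk)]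
  have h1 := hw (k - 1 - 1)
  have h2 := hw (k - 1)
  rw [sub_add_cancel] at h1 h2
  have h3 : w (k - 1) ≤ A (k - 1) * w (k - 1) := Nat.le_mul_of_pos_left _ (hA _)
  simp only [rewrite, map_add, Finsupp.weight_single, smul_eq_mul, one_mul, Nat.sub_one_mul]
  omega

variable (A) in
inductive Reduces : (Fin n →₀ ℕ) → ℤ → Reduced A → Prop
  | refl (v : Reduced A) : Reduces v.1 1 v
  | step {k : Fin n} {u : Fin n →₀ ℕ} {c : ℤ} {v : Reduced A} :
      A k ≤ u k → Reduces (rewrite A k u) c v → Reduces u (-A (k - 1) * c) v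

/-- Rewrites at different positions commute, so a reduction may start with any applicable
rewrite; this makes normal forms unique. -/
theorem Reduces.exists_of_rewrite {u : Fin n →₀ ℕ} {c : ℤ} {v : Reduced A} (h : Reduces A u c v)
    {k : Fin n} (hk : A k ≤ u k) : ∃ c', c = -A (k - 1) * c' ∧ Reduces A (rewrite A k u) c' v := by
  induction h generalizing k with
  | refl v => exact absurd hk (v.2 k).not_ge
  | @step k' u c v hk' h ih =>
    by_cases hkk : k' = k
    · subst hkk
      exact ⟨c, rfl, h⟩
    · obtain ⟨c', rfl, h'⟩ := ih (le_rewrite_apply hkk hk)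
      refine ⟨-A (k' - 1) * c', by ring, ?_⟩
      refine .step (le_rewrite_apply (Ne.symm hkk) hk') ?_
      rwa [rewrite_comm hkk hk' hk]

theorem Reduces.unique {u : Fin n →₀ ℕ} {c c' : ℤ} {v v' : Reduced A} (h : Reduces A u c v)
    (h' : Reduces A u c' v') : c = c' ∧ v = v' := by
  induction h generalizing c' with
  | refl v =>
    generalize hu : v.1 = u at h'
    cases h' with
    | refl v' => exact ⟨rfl, Subtype.ext hu⟩
    | step hk => exact absurd hk (hu ▸ v.2 _).not_ge
  | step hk _ ih =>
    obtain ⟨c'', rfl, h''⟩ := h'.exists_of_rewrite hk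
    obtain ⟨rfl, rfl⟩ := ih h''
    exact ⟨rfl, rfl⟩

theorem exists_le_of_not_reduces {u : Fin n →₀ ℕ} (hu : ∀ c v, ¬Reduces A u c v) :
    ∃ k, A k ≤ u k := by
  by_contra! h
  exact hu 1 ⟨u, h⟩ (.refl ⟨u, h⟩)

variable (A) in
/-- The predecessor `i - 1` is taken in `Fin n`, so that of `0` is `n - 1`. -/
def dualLoop : MvPolynomial (Fin n) R := ∑ i, X (i - 1) * X i ^ A i

theorem pderiv_dualLoop (j : Fin n) :
    pderiv j (dualLoop R A) =
      X (j + 1) ^ A (j + 1) + C (A j : R) * X (j - 1) * X j ^ (A j - 1) := by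
  simp only [dualLoop, map_sum, Derivation.leibniz, Derivation.leibniz_pow, pderiv_X,
    Pi.single_apply, smul_eq_mul, mul_ite, mul_one, mul_zero, smul_ite, nsmul_eq_mul,
    sub_eq_iff_eq_add, Finset.sum_add_distrib, Finset.sum_ite_eq', Finset.mem_univ, ↓reduceIte,
    map_natCast]
  ring

theorem monomial_mul_pderiv_dualLoop (k : Fin n) (u : Fin n →₀ ℕ) :
    monomial u 1 * pderiv (k - 1) (dualLoop R A) = monomial (u + Finsupp.single k (A k)) 1 +
      A (k - 1) • monomial (rewrite A k (u + Finsupp.single k (A k))) (1 : R) := by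
  rw [pderiv_dualLoop, sub_add_cancel, rewrite, add_tsub_cancel_right, X_pow_eq_monomial,
    X_pow_eq_monomial, X, C_mul_monomial, monomial_mul, mul_add, monomial_mul, monomial_mul,
    ← Nat.cast_smul_eq_nsmul R, smul_monomial]
  simp only [one_mul, mul_one, smul_eq_mul]

theorem mk_monomial_eq_zsmul_mk_rewrite {k : Fin n} {u : Fin n →₀ ℕ} (hk : A k ≤ u k) :
    Ideal.Quotient.mk (jacobianIdeal (dualLoop R A)) (monomial u 1) =
      (-A (k - 1) : ℤ) • Ideal.Quotient.mk _ (monomial (rewrite A k u) 1) := by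
  obtain ⟨u₀, rfl⟩ : ∃ u₀, u = u₀ + Finsupp.single k (A k) :=
    ⟨_, (tsub_add_cancel_of_le (Finsupp.single_le_iff.mpr hk)).symm⟩
  have hmem : monomial u₀ 1 * pderiv (k - 1) (dualLoop R A) ∈ jacobianIdeal (dualLoop R A) :=
    Ideal.mul_mem_left _ _ (Ideal.subset_span ⟨k - 1, rfl⟩)
  rw [monomial_mul_pderiv_dualLoop, ← Ideal.Quotient.eq_zero_iff_mem, map_add, map_nsmul] at hmem
  rw [neg_smul, natCast_zsmul, eq_neg_iff_add_eq_zero, hmem]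

theorem Reduces.mk_monomial_eq {u : Fin n →₀ ℕ} {c : ℤ} {v : Reduced A} (h : Reduces A u c v) :
    Ideal.Quotient.mk (jacobianIdeal (dualLoop R A)) (monomial u 1) =
      c • Ideal.Quotient.mk _ (monomial v.1 1) := by
  induction h with
  | refl v => rw [one_smul]
  | step hk _ ih => rw [mk_monomial_eq_zsmul_mk_rewrite R hk, ih, smul_smul]

theorem mk_monomial_eq_zero_of_not_reduces [CharZero K] (hA : ∀ i, 2 ≤ A i) {u : Fin n →₀ ℕ}
    (hu : ∀ c v, ¬Reduces A u c v) :
    Ideal.Quotient.mk (jacobianIdeal (dualLoop K A)) (monomial u 1) = 0 := by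
  obtain ⟨w, hw0, D, hw⟩ := exists_quasiHomogeneous_weight A hA
  let stuck : Set (Fin n →₀ ℕ) :=
    {v | Finsupp.weight w v = Finsupp.weight w u ∧ ∀ c v', ¬Reduces A v c v'}
  have : Finite stuck :=
    ((Finsupp.finite_of_nat_weight_eq w hw0 _).subset fun _ hv => hv.1).to_subtype
  have := IsAddTorsionFree.of_isTorsionFree K
    (MvPolynomial (Fin n) K ⧸ jacobianIdeal (dualLoop K A))
  refine IsAddTorsionFree.eq_zero_of_forall_exists_eq_zsmul
    (fun v : stuck => Ideal.Quotient.mk _ (monomial v.1 1)) ?_ ⟨u, rfl, hu⟩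
  rintro ⟨v, hvw, hv⟩
  obtain ⟨k, hk⟩ := exists_le_of_not_reduces hv
  refine ⟨⟨rewrite A k v, (weight_rewrite (fun i => one_le_two.trans (hA i)) hw hk).trans hvw,
    fun c v' h => hv _ _ (.step hk h)⟩, -A (k - 1), ?_, mk_monomial_eq_zsmul_mk_rewrite K hk⟩
  rw [abs_neg, Nat.abs_cast]
  exact_mod_cast hA _

open Classical in
variable (A) in
/-- `0` is the right value without a normal form: in characteristic zero such monomials vanish in
the Milnor ring. -/
def normalForm (u : Fin n →₀ ℕ) : Reduced A →₀ R :=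
  if h : ∃ p : ℤ × Reduced A, Reduces A u p.1 p.2 then Finsupp.single h.choose.2 (h.choose.1 : R)
  else 0

theorem normalForm_eq_of_reduces {u : Fin n →₀ ℕ} {c : ℤ} {v : Reduced A} (h : Reduces A u c v) :
    normalForm R A u = Finsupp.single v (c : R) := by
  have hex : ∃ p : ℤ × Reduced A, Reduces A u p.1 p.2 := ⟨(c, v), h⟩
  obtain ⟨hc, hv⟩ := hex.choose_spec.unique h
  rw [normalForm, dif_pos hex, hc, hv]

theorem normalForm_eq_zero {u : Fin n →₀ ℕ} (hu : ∀ c v, ¬Reduces A u c v) :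
    normalForm R A u = 0 :=
  dif_neg fun ⟨p, h⟩ => hu p.1 p.2 h

theorem normalForm_eq_neg_smul_rewrite {k : Fin n} {u : Fin n →₀ ℕ} (hk : A k ≤ u k) :
    normalForm R A u = (-A (k - 1) : R) • normalForm R A (rewrite A k u) := by
  by_cases h : ∃ c v, Reduces A u c v
  · obtain ⟨c, v, h⟩ := h
    obtain ⟨c', rfl, h'⟩ := h.exists_of_rewrite hk
    rw [normalForm_eq_of_reduces R h, normalForm_eq_of_reduces R h', Finsupp.smul_single,
      smul_eq_mul]
    push_cast
    rfl
  · push Not at h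
    rw [normalForm_eq_zero R h, normalForm_eq_zero R fun _ v h' => h _ v (.step hk h'), smul_zero]

variable (A) in
def normalFormMap : MvPolynomial (Fin n) R →ₗ[R] Reduced A →₀ R :=
  (basisMonomials (Fin n) R).constr R (normalForm R A)

theorem normalFormMap_monomial (u : Fin n →₀ ℕ) (c : R) :
    normalFormMap R A (monomial u c) = c • normalForm R A u := by
  have hbasis : basisMonomials (Fin n) R u = monomial u 1 := by rw [coe_basisMonomials]
  rw [monomial_eq_smul_monomial_one, map_smul, normalFormMap, ← hbasis, Module.Basis.constr_basis]

theorem normalFormMap_eq_zero_of_mem {f : MvPolynomial (Fin n) R}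
    (hf : f ∈ jacobianIdeal (dualLoop R A)) : normalFormMap R A f = 0 := by
  suffices ∀ q, normalFormMap R A (q * f) = 0 by simpa using this 1
  induction hf using Submodule.span_induction with
  | mem g hg =>
    obtain ⟨j, rfl⟩ := hg
    obtain ⟨k, rfl⟩ : ∃ k, j = k - 1 := ⟨j + 1, (add_sub_cancel_right j 1).symm⟩
    intro q
    induction q using MvPolynomial.induction_on' with
    | monomial u c =>
      have hk : A k ≤ (u + Finsupp.single k (A k)) k := by simp
      change normalFormMap R A (monomial u c * pderiv (k - 1) (dualLoop R A)) = 0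
      rw [monomial_eq_smul_monomial_one, smul_mul_assoc,
        monomial_mul_pderiv_dualLoop, map_smul, map_add, map_nsmul, normalFormMap_monomial,
        normalFormMap_monomial, normalForm_eq_neg_smul_rewrite R hk]
      module
    | add p q hp hq => rw [add_mul, map_add, hp, hq, add_zero]
  | zero => simp
  | add x y _ _ hx hy => intro q; rw [mul_add, map_add, hx, hy, add_zero]
  | smul a x _ hx => intro q; rw [smul_eq_mul, ← mul_assoc, hx]

variable (A) in
def reducedMonomials : (Reduced A →₀ R) →ₗ[R] MvPolynomial (Fin n) R :=
  Finsupp.linearCombination R fun v => monomial v.1 1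

theorem normalFormMap_reducedMonomials (x : Reduced A →₀ R) :
    normalFormMap R A (reducedMonomials R A x) = x := by
  induction x using Finsupp.induction_linear with
  | zero => simp only [map_zero]
  | add x y hx hy => rw [map_add, map_add, hx, hy]
  | single v c =>
    rw [reducedMonomials, Finsupp.linearCombination_single, ← monomial_eq_smul_monomial_one,
      normalFormMap_monomial, normalForm_eq_of_reduces R (.refl v), Finsupp.smul_single,
      Int.cast_one, smul_eq_mul, mul_one]

theorem mk_reducedMonomials_normalForm [CharZero K] (hA : ∀ i, 2 ≤ A i) (u : Fin n →₀ ℕ) :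
    Ideal.Quotient.mk (jacobianIdeal (dualLoop K A)) (reducedMonomials K A (normalForm K A u)) =
      Ideal.Quotient.mk _ (monomial u 1) := by
  by_cases h : ∃ c v, Reduces A u c v
  · obtain ⟨c, v, h⟩ := h
    rw [normalForm_eq_of_reduces K h, reducedMonomials, Finsupp.linearCombination_single,
      Int.cast_smul_eq_zsmul, map_zsmul, h.mk_monomial_eq K]
  · push Not at h
    rw [normalForm_eq_zero K h, map_zero, map_zero, mk_monomial_eq_zero_of_not_reduces K hA h]

theorem mk_reducedMonomials_normalFormMap [CharZero K] (hA : ∀ i, 2 ≤ A i)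
    (f : MvPolynomial (Fin n) K) :
    Ideal.Quotient.mk (jacobianIdeal (dualLoop K A)) (reducedMonomials K A (normalFormMap K A f)) =
      Ideal.Quotient.mk _ f := by
  induction f using MvPolynomial.induction_on' with
  | add p q hp hq => rw [map_add, map_add, map_add, hp, hq, map_add]
  | monomial u c =>
    rw [normalFormMap_monomial, map_smul, monomial_eq_smul_monomial_one u c, smul_eq_C_mul,
      smul_eq_C_mul, map_mul, map_mul, mk_reducedMonomials_normalForm K hA]

variable (A) in
def quotientJacobianEquiv [CharZero K] (hA : ∀ i, 2 ≤ A i) :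
    (MvPolynomial (Fin n) K ⧸ jacobianIdeal (dualLoop K A)) ≃ₗ[K] (Reduced A →₀ K) := by
  refine (LinearEquiv.ofBijective
    ((Ideal.Quotient.mkₐ K _).toLinearMap ∘ₗ reducedMonomials K A) ⟨?_, fun q => ?_⟩).symm
  · refine (injective_iff_map_eq_zero _).mpr fun x hx => ?_
    rw [← normalFormMap_reducedMonomials K x]
    exact normalFormMap_eq_zero_of_mem K (Ideal.Quotient.eq_zero_iff_mem.mp hx)
  · obtain ⟨f, rfl⟩ := Ideal.Quotient.mk_surjective q
    exact ⟨normalFormMap K A f, mk_reducedMonomials_normalFormMap K hA f⟩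

theorem finiteDimensional_quotient_jacobianIdeal_dualLoop [CharZero K] (hA : ∀ i, 2 ≤ A i) :
    FiniteDimensional K (MvPolynomial (Fin n) K ⧸ jacobianIdeal (dualLoop K A)) :=
  (quotientJacobianEquiv K A hA).symm.finiteDimensional

theorem finrank_quotient_jacobianIdeal_dualLoop [CharZero K] (hA : ∀ i, 2 ≤ A i) :
    Module.finrank K (MvPolynomial (Fin n) K ⧸ jacobianIdeal (dualLoop K A)) = ∏ k, A k := by
  rw [(quotientJacobianEquiv K A hA).finrank_eq, Module.finrank_finsupp_self, card_reduced]

end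

end DualLoop

/-- The Milnor ring of the dual loop polynomial
`w = x_n x_1^{a_1} + ∑_{i=2}^{n} x_{i−1} x_i^{a_i}` is finite dimensional over `ℂ`,
of dimension `μ_w = ∏_{j=1}^{n} a_j`. Indices are `0`-based via `Fin n`:
the predecessor of the variable `i = 0` is `n − 1`. -/
theorem dual_loop_milnor_number {n : ℕ} (hn : 2 ≤ n) (a : ℕ → ℕ)
    (ha : ∀ i < n, 2 ≤ a i)
    (w : MvPolynomial (Fin n) ℂ)
    (hw : w = ∑ i : Fin n,
      if (i : ℕ) = 0 then
        X (⟨n - 1, Nat.sub_lt (by omega) one_pos⟩ : Fin n) * X i ^ a (i : ℕ)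
      else X (⟨(i : ℕ) - 1, Nat.lt_of_le_of_lt (Nat.sub_le _ _) i.isLt⟩ : Fin n) *
        X i ^ a (i : ℕ))
    (J : Ideal (MvPolynomial (Fin n) ℂ))
    (hJ : J = Ideal.span (Set.range fun i => MvPolynomial.pderiv i w)) :
    FiniteDimensional ℂ (MvPolynomial (Fin n) ℂ ⧸ J) ∧
      Module.finrank ℂ (MvPolynomial (Fin n) ℂ ⧸ J) = ∏ j ∈ Finset.range n, a j := by
  obtain ⟨m, rfl⟩ : ∃ m, n = m + 1 := ⟨n - 1, by omega⟩
  have hA : ∀ i : Fin (m + 1), 2 ≤ a i := fun i => ha i i.isLt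
  have hw' : w = DualLoop.dualLoop ℂ fun i : Fin (m + 1) => a i := by
    rw [hw, DualLoop.dualLoop]
    refine Finset.sum_congr rfl fun i _ => ?_
    split_ifs with hi <;> congr 2 <;> ext <;> rw [Fin.coe_sub_one] <;> simp [Fin.ext_iff, hi]
  subst hJ hw'
  rw [← Fin.prod_univ_eq_prod_range]
  exact ⟨DualLoop.finiteDimensional_quotient_jacobianIdeal_dualLoop ℂ hA,
    DualLoop.finrank_quotient_jacobianIdeal_dualLoop ℂ hA⟩
end

section
/- Let n ≥ 1 and let a_1, …, a_n be integers with a_i ≥ 2. Let E be the chain exponent matrix (diagonal a_i, superdiagonal 1, other entries 0), set ρ_j^{(i)} = (E^{-1})_{ij} and q_i = Σ_{j=1}^{n} (E^{-1})_{ij}. Let 0 ≤ k ≤ ⌊n/2⌋ and let m ∈ ℕ^n satisfy m_{n−2i} = a_{n−2i} − 1 and m_{n−2i−1} = 0 for 0 ≤ i ≤ k−1, and 0 ≤ m_j ≤ a_j − 1 − δ_{j,n−2k} for 1 ≤ j ≤ n−2k (i.e., m lies in the stratum 𝔅^k). Define θ_i(m) = q_i + Σ_{j=1}^{n} m_j ρ_j^{(i)}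 ∈ ℚ. Then θ_i(m) ∈ ℤ for every i with n−2k < i ≤ n; and if k = 0, then θ_i(m) ∉ ℤ for every i with 1 ≤ i ≤ n. -/
/-!
Since `θ = E⁻¹ (1 + m)`, the vector `θ` solves the backward recurrence
`a i * θ i + θ (i + 1) = 1 + m i` with `θ n = 0`. On the tail of the stratum the right-hand side
alternates between `a i` and `1`, which is also solved by the sequence `(n - i) % 2`, so by
uniqueness `θ i ∈ {0, 1}` there. For `k = 0` we have `1 ≤ 1 + m i ≤ a i`, strictly at the last
index, and backward induction keeps every `θ i` strictly between `0` and `1`.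
-/

open Matrix

section ChainMatrix

variable {R : Type*} {n : ℕ}

section Zero

variable [Zero R]

def extendByZero (v : Fin n → R) (j : ℕ) : R :=
  if h : j < n then v ⟨j, h⟩ else 0

theorem extendByZero_of_lt (v : Fin n → R) {j : ℕ} (h : j < n) :
    extendByZero v j = v ⟨j, h⟩ :=
  dif_pos h

theorem extendByZero_self (v : Fin n → R) : extendByZero v n = 0 :=
  dif_neg (lt_irrefl n)

end Zero

variable [CommRing R]

def chainMatrix (n : ℕ) (a : ℕ → R) : Matrix (Fin n) (Fin n) R :=
  Matrix.of fun i j => if i = j then a i else if (i : ℕ) + 1 = j then 1 else 0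

theorem chainMatrix_isUpperTriangular (a : ℕ → R) : (chainMatrix n a).IsUpperTriangular := by
  intro i j hji
  have hij : i ≠ j := hji.ne'
  have hsucc : (i : ℕ) + 1 ≠ j := by simp only [id] at hji; omega
  simp [chainMatrix, hij, hsucc]

theorem det_chainMatrix (a : ℕ → R) : (chainMatrix n a).det = ∏ i : Fin n, a i := by
  rw [det_of_isUpperTriangular (chainMatrix_isUpperTriangular a)]
  simp [chainMatrix]

theorem chainMatrix_mulVec_apply (a : ℕ → R) (v : Fin n → R) (i : Fin n) :
    (chainMatrix n a *ᵥ v) i = a i * v i + extendByZero v (i + 1) := by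
  have hterm : ∀ j, chainMatrix n a i j * v j =
      (if i = j then a i * v i else 0) + (if (i : ℕ) + 1 = j then v j else 0) := by
    intro j
    by_cases hij : i = j
    · subst hij; simp [chainMatrix]
    · by_cases hsucc : (i : ℕ) + 1 = j <;> simp [chainMatrix, hij, hsucc]
  simp only [mulVec, dotProduct, hterm, Finset.sum_add_distrib, Finset.sum_ite_eq,
    Finset.mem_univ, if_true, add_right_inj]
  unfold extendByZero
  split_ifs with h
  · rw [Finset.sum_eq_single_of_mem ⟨i + 1, h⟩ (Finset.mem_univ _) fun j _ hj => if_neg ?_]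
    · simp
    · exact fun hij => hj (Fin.ext hij.symm)
  · exact Finset.sum_eq_zero fun j _ => if_neg (by omega)

theorem chain_recurrence_of_mulVec_eq {a : ℕ → R} {v w : Fin n → R}
    (h : chainMatrix n a *ᵥ v = w) (i : ℕ) (hi : i < n) :
    a i * extendByZero v i + extendByZero v (i + 1) = extendByZero w i := by
  rw [extendByZero_of_lt v hi, extendByZero_of_lt w hi, ← h, chainMatrix_mulVec_apply]

theorem chain_recurrence_of_eq_inv_mulVec {K : Type*} [Field K] {a : ℕ → K}
    (ha : ∀ i < n, a i ≠ 0) {v w : Fin n → K} (hv : v = (chainMatrix n a)⁻¹ *ᵥ w)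
    (i : ℕ) (hi : i < n) :
    a i * extendByZero v i + extendByZero v (i + 1) = extendByZero w i := by
  have hdet : IsUnit (chainMatrix n a).det := by
    rw [det_chainMatrix, isUnit_iff_ne_zero, Finset.prod_ne_zero_iff]
    exact fun j _ => ha j j.isLt
  refine chain_recurrence_of_mulVec_eq ?_ i hi
  rw [hv, mulVec_mulVec, mul_nonsing_inv _ hdet, one_mulVec]

end ChainMatrix

section BackwardRecurrence

variable {n : ℕ}

theorem eq_of_backward_recurrence {R : Type*} [CommRing R] [IsDomain R] {a c x y : ℕ → R}
    {s : ℕ} (ha : ∀ i, s ≤ i → i < n → a i ≠ 0)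
    (hx : ∀ i, s ≤ i → i < n → a i * x i + x (i + 1) = c i)
    (hy : ∀ i, s ≤ i → i < n → a i * y i + y (i + 1) = c i)
    (hxy : x n = y n) {i : ℕ} (hsi : s ≤ i) (hin : i ≤ n) : x i = y i := by
  refine Nat.decreasingInduction' (fun k hkn hik ih => ?_) hin hxy
  have hsk : s ≤ k := hsi.trans hik
  apply mul_left_cancel₀ (ha k hsk hkn)
  linear_combination hx k hsk hkn - hy k hsk hkn - ih

theorem mem_Ioo_of_backward_recurrence {K : Type*} [CommRing K] [LinearOrder K]
    [IsStrictOrderedRing K] {a c x : ℕ → K} (ha : ∀ i < n, 0 < a i)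
    (hx : ∀ i < n, a i * x i + x (i + 1) = c i) (hxn : x n = 0)
    (hc : ∀ i < n, 1 ≤ c i ∧ c i ≤ a i) (hlast : ∀ i, i + 1 = n → c i < a i)
    {i : ℕ} (hi : i < n) : x i ∈ Set.Ioo 0 1 := by
  suffices ∀ j ≤ n, j < n → x j ∈ Set.Ioo 0 1 from this i hi.le hi
  intro j hjn
  induction hjn using Nat.decreasingInduction with
  | self => exact fun h => absurd h (lt_irrefl n)
  | of_succ k hkn ih =>
    intro _
    have hrec := hx k hkn
    have hck := hc k hkn
    have hbounds : 0 < a k * x k ∧ a k * x k < a k * 1 := by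
      rcases Nat.lt_or_ge (k + 1) n with hlt | hge
      · have := ih hlt
        constructor <;> linarith [this.1, this.2]
      · have heq : k + 1 = n := by omega
        have := hlast k heq
        rw [heq, hxn] at hrec
        constructor <;> linarith
    exact ⟨pos_of_mul_pos_right hbounds.1 (ha k hkn).le,
      lt_of_mul_lt_mul_left hbounds.2 (ha k hkn).le⟩

end BackwardRecurrence

section ChainRecurrence

variable {n : ℕ} {a m : ℕ → ℕ} {x : ℕ → ℚ}

theorem eq_parity_of_chain_recurrence
    (hrec : ∀ i < n, (a i : ℚ) * x i + x (i + 1) = 1 + m i) (hxn : x n = 0)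
    (ha : ∀ i < n, 0 < a i) {s : ℕ}
    (hm : ∀ i, s ≤ i → i < n →
      ((n - 1 - i) % 2 = 0 → m i = a i - 1) ∧ ((n - 1 - i) % 2 = 1 → m i = 0))
    {i : ℕ} (hsi : s ≤ i) (hin : i ≤ n) : x i = ((n - i) % 2 : ℕ) := by
  refine eq_of_backward_recurrence (y := fun j => (((n - j) % 2 : ℕ) : ℚ))
    (fun j _ hj => by have := ha j hj; positivity) (fun j _ hj => hrec j hj) (fun j hsj hj => ?_) (by simp [hxn]) hsi hin
  rcases Nat.mod_two_eq_zero_or_one (n - 1 - j) with h | h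
  · rw [(hm j hsj hj).1 h, show (n - j) % 2 = 1 by omega, show (n - (j + 1)) % 2 = 0 by omega]
    push_cast [Nat.cast_sub (ha j hj)]
    ring
  · rw [(hm j hsj hj).2 h, show (n - j) % 2 = 0 by omega, show (n - (j + 1)) % 2 = 1 by omega]
    push_cast
    ring

theorem mem_Ioo_of_chain_recurrence
    (hrec : ∀ i < n, (a i : ℚ) * x i + x (i + 1) = 1 + m i) (hxn : x n = 0)
    (ha : ∀ i < n, 2 ≤ a i) (hm : ∀ i < n, m i ≤ a i - 1 - if i = n - 1 then 1 else 0)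
    {i : ℕ} (hi : i < n) : x i ∈ Set.Ioo 0 1 := by
  refine mem_Ioo_of_backward_recurrence (fun j hj => by have := ha j hj; positivity) hrec hxn
    (fun j hj => ⟨by simp, ?_⟩) (fun j hj => ?_) hi
  · have hmj := hm j hj
    have := ha j hj
    exact_mod_cast (by split_ifs at hmj <;> omega : 1 + m j ≤ a j)
  · have hmj := hm j (by omega)
    have := ha j (by omega)
    exact_mod_cast (by rw [if_pos (by omega)] at hmj; omega : 1 + m j < a j)

end ChainRecurrence

theorem not_exists_intCast_eq_of_mem_Ioo {K : Type*} [Ring K] [LinearOrder K]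
    [IsStrictOrderedRing K] [FloorRing K] {x : K} (hx : x ∈ Set.Ioo 0 1) :
    ¬∃ z : ℤ, x = z := by
  rintro ⟨z, rfl⟩
  have hfract := Int.fract_eq_self.2 ⟨hx.1.le, hx.2⟩
  rw [Int.fract_intCast] at hfract
  exact hx.1.ne hfract

theorem chain_group_element_fixed_variables_general {n : ℕ} (a : ℕ → ℕ)
    (ha : ∀ i < n, 2 ≤ a i)
    (E : Matrix (Fin n) (Fin n) ℚ)
    (hE : ∀ i j : Fin n, E i j =
      if i = j then (a i : ℚ) else if (i : ℕ) + 1 = (j : ℕ) then 1 else 0)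
    (k : ℕ)
    (m : Fin n → ℕ)
    (hm1 : ∀ j : Fin n, (j : ℕ) < n - 2 * k →
      m j ≤ a (j : ℕ) - 1 - (if (j : ℕ) = n - 2 * k - 1 then 1 else 0))
    (hm2 : ∀ j : Fin n, n - 2 * k ≤ (j : ℕ) →
      ((n - 1 - (j : ℕ)) % 2 = 0 → m j = a (j : ℕ) - 1) ∧
      ((n - 1 - (j : ℕ)) % 2 = 1 → m j = 0))
    (θ : Fin n → ℚ)
    (hθ : ∀ i : Fin n, θ i = (∑ j : Fin n, E⁻¹ i j) + ∑ j : Fin n, (m j : ℚ) * E⁻¹ i j) :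
    (∀ i : Fin n, n - 2 * k ≤ (i : ℕ) → ∃ z : ℤ, θ i = z) ∧
      (k = 0 → ∀ i : Fin n, ¬∃ z : ℤ, θ i = z) := by
  have hE' : E = chainMatrix n fun i => (a i : ℚ) := by
    ext i j
    rw [hE]
    rfl
  have hθ' : θ = E⁻¹ *ᵥ fun j => 1 + (m j : ℚ) := by
    funext i
    simp [hθ i, mulVec, dotProduct, mul_add, Finset.sum_add_distrib, mul_comm]
  have hrec : ∀ i < n, (a i : ℚ) * extendByZero θ i + extendByZero θ (i + 1) =
      1 + (extendByZero m i : ℕ) := fun i hi => by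
    refine (chain_recurrence_of_eq_inv_mulVec (fun j hj => by have := ha j hj; positivity)
      (hE' ▸ hθ') i hi).trans ?_
    rw [extendByZero_of_lt _ hi, extendByZero_of_lt _ hi]
  have hθi (i : Fin n) : θ i = extendByZero θ i := (extendByZero_of_lt θ i.isLt).symm
  refine ⟨fun i hi => ⟨((n - i) % 2 : ℕ), ?_⟩, fun hk0 i => ?_⟩
  · rw [hθi, eq_parity_of_chain_recurrence hrec (extendByZero_self θ)
      (fun j hj => by have := ha j hj; omega)
      (fun j hsj hj => by rw [extendByZero_of_lt m hj]; exact hm2 ⟨j, hj⟩ hsj) hi i.isLt.le]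
    rfl
  · subst hk0
    rw [hθi]
    refine not_exists_intCast_eq_of_mem_Ioo (mem_Ioo_of_chain_recurrence hrec
      (extendByZero_self θ) ha (fun j hj => ?_) i.isLt)
    rw [extendByZero_of_lt m hj]
    simpa using hm1 ⟨j, hj⟩ hj

/-- For the chain exponent matrix `E` (diagonal `a i`,
superdiagonal `1`, other entries `0`), set `ρ_j^{(i)} = (E⁻¹) i j` and
`q i = ∑_j (E⁻¹) i j`. For a standard vector `m` in the stratum `𝔅^k` of
Kreuzer's index set, let `θ i = q i + ∑_j m j · ρ_j^{(i)}`. Then `θ i ∈ ℤ` for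
every `i` in the tail (`0`-based `(i : ℕ) ≥ n − 2k`), and if `k = 0` then
`θ i ∉ ℤ` for every `i`. Indices are `0`-based via `Fin n`; the stratum `𝔅^k`
requires, for `(j : ℕ) ≥ n − 2k`, `m j = a j − 1` when `n − 1 − j` is even and
`m j = 0` when it is odd, and for `(j : ℕ) < n − 2k`,
`m j ≤ a j − 1 − δ_{j, n−2k−1}`. -/
theorem chain_group_element_fixed_variables {n : ℕ} (hn : 1 ≤ n) (a : ℕ → ℕ)
    (ha : ∀ i < n, 2 ≤ a i)
    (E : Matrix (Fin n) (Fin n) ℚ)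
    (hE : ∀ i j : Fin n, E i j =
      if i = j then (a i : ℚ) else if (i : ℕ) + 1 = (j : ℕ) then 1 else 0)
    (k : ℕ) (hk : k ≤ n / 2)
    (m : Fin n → ℕ)
    (hm1 : ∀ j : Fin n, (j : ℕ) < n - 2 * k →
      m j ≤ a (j : ℕ) - 1 - (if (j : ℕ) = n - 2 * k - 1 then 1 else 0))
    (hm2 : ∀ j : Fin n, n - 2 * k ≤ (j : ℕ) →
      ((n - 1 - (j : ℕ)) % 2 = 0 → m j = a (j : ℕ) - 1) ∧
      ((n - 1 - (j : ℕ)) % 2 = 1 → m j = 0))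
    (θ : Fin n → ℚ)
    (hθ : ∀ i : Fin n, θ i = (∑ j : Fin n, E⁻¹ i j) + ∑ j : Fin n, (m j : ℚ) * E⁻¹ i j) :
    (∀ i : Fin n, n - 2 * k ≤ (i : ℕ) → ∃ z : ℤ, θ i = z) ∧
      (k = 0 → ∀ i : Fin n, ¬∃ z : ℤ, θ i = z) :=
  chain_group_element_fixed_variables_general a ha E hE k m hm1 hm2 θ hθ
end

section
/- Let a_1, …, a_n be integers with a_i ≥ 2. (Chain case, n ≥ 1:) Let E be the chain exponent matrix (diagonal a_i, superdiagonal 1, other entries 0), ρ_j^{(i)} = (E^{-1})_{ij}, q_i = Σ_j (E^{-1})_{ij}. Then for 1 ≤ i ≤ n: there exists k with q_k + ρ_i^{(k)} ∈ ℤ if and only if i = n and a_n = 2. (Loop case, n ≥ 2:) Let E be the loop exponent matrix (diagonal a_i, superdiagonal 1, corner entry E_{n,1} = 1, other entries 0), ρ_j^{(i)} = (E^{-1})_{ij}, q_i = Σ_j (E^{-1})_{ij}. Then for 1 ≤ i ≤ n: there exists k with q_k + ρ_i^{(k)} ∈ ℤ if and only if n = 2 and a_i = 2. -/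
open Finset

lemma sumIfCoe {n t : ℕ} (f : Fin n → ℚ) :
    (∑ m : Fin n, if (m : ℕ) = t then f m else 0) = if h : t < n then f ⟨t, h⟩ else 0 := by
  split
  · rename_i h
    rw [Finset.sum_eq_single ⟨t, h⟩]
    · simp
    · intro b _ hb
      rw [if_neg]
      intro hc
      exact hb (Fin.ext hc)
    · simp
  · rename_i h
    apply Finset.sum_eq_zero
    intro m _
    rw [if_neg]
    omega

lemma chain_row {n : ℕ} (a : ℕ → ℕ) (Ec : Matrix (Fin n) (Fin n) ℚ)
    (hEc : ∀ i j : Fin n, Ec i j =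
      if i = j then (a i : ℚ) else if (i : ℕ) + 1 = (j : ℕ) then 1 else 0)
    (f : Fin n → ℚ) (k : Fin n) :
    ∑ m, Ec k m * f m
      = (a k : ℚ) * f k + (if h : (k : ℕ) + 1 < n then f ⟨(k : ℕ) + 1, h⟩ else 0) := by
  have step : ∀ m : Fin n, Ec k m * f m
      = (if m = k then (a k : ℚ) * f m else 0) + (if (m : ℕ) = (k : ℕ) + 1 then f m else 0) := by
    intro m
    rw [hEc]
    by_cases h1 : m = k
    · subst h1
      rw [if_pos rfl, if_pos rfl, if_neg (by omega)]
      ring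
    · rw [if_neg (fun h => h1 h.symm), if_neg h1]
      by_cases h2 : (k : ℕ) + 1 = (m : ℕ)
      · rw [if_pos h2, if_pos h2.symm]; ring
      · rw [if_neg h2, if_neg (fun h => h2 h.symm)]; ring
  rw [Finset.sum_congr rfl (fun m _ => step m), Finset.sum_add_distrib, sumIfCoe,
    Finset.sum_ite_eq' Finset.univ k (fun m => (a k : ℚ) * f m)]
  simp

lemma loop_row {n : ℕ} (hn : 2 ≤ n) (a : ℕ → ℕ) (El : Matrix (Fin n) (Fin n) ℚ)
    (hEl : ∀ i j : Fin n, El i j =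
      if i = j then (a i : ℚ)
      else if (i : ℕ) + 1 = (j : ℕ) then 1
      else if (i : ℕ) = n - 1 ∧ (j : ℕ) = 0 then 1 else 0)
    (f : Fin n → ℚ) (k : Fin n) :
    ∑ m, El k m * f m
      = (a k : ℚ) * f k + f ⟨((k : ℕ) + 1) % n, Nat.mod_lt _ (by omega)⟩ := by
  have hkn := k.isLt
  have step : ∀ m : Fin n, El k m * f m
      = (if m = k then (a k : ℚ) * f m else 0)
        + (if (m : ℕ) = ((k : ℕ) + 1) % n then f m else 0) := by
    intro m
    rw [hEl]
    by_cases h1 : m = k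
    · subst h1
      rw [if_pos rfl, if_pos rfl, if_neg]
      · ring
      · rcases Nat.lt_or_ge ((m : ℕ) + 1) n with h | h
        · rw [Nat.mod_eq_of_lt h]; omega
        · have : (m : ℕ) + 1 = n := by omega
          rw [this, Nat.mod_self]; omega
    · rw [if_neg (fun h => h1 h.symm), if_neg h1]
      rcases Nat.lt_or_ge ((k : ℕ) + 1) n with h | h
      · rw [Nat.mod_eq_of_lt h]
        by_cases h2 : (k : ℕ) + 1 = (m : ℕ)
        · rw [if_pos h2, if_pos h2.symm]; ring
        · rw [if_neg h2, if_neg (by omega), if_neg (fun hc => h2 hc.symm)]; ring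
      · have hk1 : (k : ℕ) + 1 = n := by omega
        rw [hk1, Nat.mod_self, if_neg (by omega)]
        by_cases h2 : (m : ℕ) = 0
        · rw [if_pos ⟨by omega, h2⟩, if_pos h2]; ring
        · rw [if_neg (by tauto), if_neg h2]; ring
  rw [Finset.sum_congr rfl (fun m _ => step m), Finset.sum_add_distrib, sumIfCoe,
    Finset.sum_ite_eq' Finset.univ k (fun m => (a k : ℚ) * f m),
    dif_pos (Nat.mod_lt _ (by omega : 0 < n))]
  simp

lemma chain_det_ne {n : ℕ} (a : ℕ → ℕ) (ha : ∀ i < n, 2 ≤ a i)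
    (Ec : Matrix (Fin n) (Fin n) ℚ)
    (hEc : ∀ i j : Fin n, Ec i j =
      if i = j then (a i : ℚ) else if (i : ℕ) + 1 = (j : ℕ) then 1 else 0) :
    Ec.det ≠ 0 := by
  intro hdet
  obtain ⟨x, hx0, hx⟩ := (Matrix.exists_mulVec_eq_zero_iff).mpr hdet
  rcases Nat.eq_zero_or_pos n with hn | hn
  · subst hn
    exact hx0 (funext fun k => k.elim0)
  obtain ⟨k0, -, hmax⟩ := Finset.exists_max_image Finset.univ (fun k => |x k|)
    ⟨⟨0, hn⟩, Finset.mem_univ _⟩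
  have hk := congrFun hx k0
  rw [Matrix.mulVec, dotProduct] at hk
  rw [chain_row a Ec hEc x k0] at hk
  simp only [Pi.zero_apply] at hk
  have ha2 : (2 : ℚ) ≤ (a k0 : ℕ) := by exact_mod_cast ha k0 k0.isLt
  have h2 : |(if h : (k0 : ℕ) + 1 < n then x ⟨(k0 : ℕ) + 1, h⟩ else 0)| ≤ |x k0| := by
    split
    · exact hmax _ (Finset.mem_univ _)
    · simpa using abs_nonneg (x k0)
  have key : 2 * |x k0| ≤ |x k0| := by
    calc 2 * |x k0| ≤ (a k0 : ℚ) * |x k0| :=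
          mul_le_mul_of_nonneg_right ha2 (abs_nonneg _)
      _ = |(a k0 : ℚ) * x k0| := by
          rw [abs_mul, abs_of_nonneg (show (0:ℚ) ≤ ((a (k0:ℕ) : ℕ) : ℚ) by positivity)]
      _ = |(if h : (k0 : ℕ) + 1 < n then x ⟨(k0 : ℕ) + 1, h⟩ else 0)| := by
          rw [show (a k0 : ℚ) * x k0
              = -(if h : (k0 : ℕ) + 1 < n then x ⟨(k0 : ℕ) + 1, h⟩ else 0) by linarith,
            abs_neg]
      _ ≤ |x k0| := h2
  apply hx0
  funext k
  have h3 : |x k| ≤ |x k0| := hmax _ (Finset.mem_univ _)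
  have : |x k| ≤ 0 := by linarith
  simpa using le_antisymm this (abs_nonneg _)

lemma loop_det_ne {n : ℕ} (hn : 2 ≤ n) (a : ℕ → ℕ) (ha : ∀ i < n, 2 ≤ a i)
    (El : Matrix (Fin n) (Fin n) ℚ)
    (hEl : ∀ i j : Fin n, El i j =
      if i = j then (a i : ℚ)
      else if (i : ℕ) + 1 = (j : ℕ) then 1
      else if (i : ℕ) = n - 1 ∧ (j : ℕ) = 0 then 1 else 0) :
    El.det ≠ 0 := by
  intro hdet
  obtain ⟨x, hx0, hx⟩ := (Matrix.exists_mulVec_eq_zero_iff).mpr hdet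
  obtain ⟨k0, -, hmax⟩ := Finset.exists_max_image Finset.univ (fun k => |x k|)
    ⟨⟨0, by omega⟩, Finset.mem_univ _⟩
  have hk := congrFun hx k0
  rw [Matrix.mulVec, dotProduct] at hk
  rw [loop_row hn a El hEl x k0] at hk
  simp only [Pi.zero_apply] at hk
  have ha2 : (2 : ℚ) ≤ (a k0 : ℕ) := by exact_mod_cast ha k0 k0.isLt
  have key : 2 * |x k0| ≤ |x k0| := by
    calc 2 * |x k0| ≤ (a k0 : ℚ) * |x k0| :=
          mul_le_mul_of_nonneg_right ha2 (abs_nonneg _)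
      _ = |(a k0 : ℚ) * x k0| := by
          rw [abs_mul, abs_of_nonneg (show (0:ℚ) ≤ ((a (k0:ℕ) : ℕ) : ℚ) by positivity)]
      _ = |x ⟨((k0 : ℕ) + 1) % n, Nat.mod_lt _ (by omega)⟩| := by
          rw [show (a k0 : ℚ) * x k0
              = -(x ⟨((k0 : ℕ) + 1) % n, Nat.mod_lt _ (by omega)⟩) by linarith,
            abs_neg]
      _ ≤ |x k0| := hmax _ (Finset.mem_univ _)
  apply hx0
  funext k
  have h3 : |x k| ≤ |x k0| := hmax _ (Finset.mem_univ _)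
  have : |x k| ≤ 0 := by linarith
  simpa using le_antisymm this (abs_nonneg _)

lemma chain_rec {n : ℕ} (a : ℕ → ℕ) (ha : ∀ i < n, 2 ≤ a i)
    (Ec : Matrix (Fin n) (Fin n) ℚ)
    (hEc : ∀ i j : Fin n, Ec i j =
      if i = j then (a i : ℚ) else if (i : ℕ) + 1 = (j : ℕ) then 1 else 0)
    (i k : Fin n) :
    (a k : ℚ) * ((∑ j, Ec⁻¹ k j) + Ec⁻¹ k i)
      + (if h : (k : ℕ) + 1 < n then (∑ j, Ec⁻¹ ⟨(k : ℕ) + 1, h⟩ j) + Ec⁻¹ ⟨(k : ℕ) + 1, h⟩ i else 0)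
      = 1 + (if k = i then 1 else 0) := by
  have hdet := chain_det_ne a ha Ec hEc
  have hmul : Ec * Ec⁻¹ = 1 := Matrix.mul_nonsing_inv _ (isUnit_iff_ne_zero.mpr hdet)
  have h := chain_row a Ec hEc (fun m => (∑ j, Ec⁻¹ m j) + Ec⁻¹ m i) k
  have e1 : ∀ j, (∑ m, Ec k m * Ec⁻¹ m j) = (1 : Matrix (Fin n) (Fin n) ℚ) k j := by
    intro j; rw [← Matrix.mul_apply, hmul]
  have hsum : (∑ m, Ec k m * ((∑ j, Ec⁻¹ m j) + Ec⁻¹ m i))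
      = 1 + (if k = i then 1 else 0) := by
    calc (∑ m, Ec k m * ((∑ j, Ec⁻¹ m j) + Ec⁻¹ m i))
        = (∑ m, ∑ j, Ec k m * Ec⁻¹ m j) + ∑ m, Ec k m * Ec⁻¹ m i := by
          rw [← Finset.sum_add_distrib]
          exact Finset.sum_congr rfl fun m _ => by rw [mul_add, Finset.mul_sum]
      _ = (∑ j, ∑ m, Ec k m * Ec⁻¹ m j) + (1 : Matrix (Fin n) (Fin n) ℚ) k i := by
          rw [Finset.sum_comm, ← Matrix.mul_apply, hmul]
      _ = (∑ j, (1 : Matrix (Fin n) (Fin n) ℚ) k j) + (1 : Matrix (Fin n) (Fin n) ℚ) k i := by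
          rw [Finset.sum_congr rfl fun j _ => e1 j]
      _ = 1 + (if k = i then 1 else 0) := by
          simp [Matrix.one_apply, Finset.sum_ite_eq]
  exact h.symm.trans hsum

lemma loop_rec {n : ℕ} (hn : 2 ≤ n) (a : ℕ → ℕ) (ha : ∀ i < n, 2 ≤ a i)
    (El : Matrix (Fin n) (Fin n) ℚ)
    (hEl : ∀ i j : Fin n, El i j =
      if i = j then (a i : ℚ)
      else if (i : ℕ) + 1 = (j : ℕ) then 1
      else if (i : ℕ) = n - 1 ∧ (j : ℕ) = 0 then 1 else 0)
    (i k : Fin n) :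
    (a k : ℚ) * ((∑ j, El⁻¹ k j) + El⁻¹ k i)
      + ((∑ j, El⁻¹ ⟨((k : ℕ) + 1) % n, Nat.mod_lt _ (by omega)⟩ j)
          + El⁻¹ ⟨((k : ℕ) + 1) % n, Nat.mod_lt _ (by omega)⟩ i)
      = 1 + (if k = i then 1 else 0) := by
  have hdet := loop_det_ne hn a ha El hEl
  have hmul : El * El⁻¹ = 1 := Matrix.mul_nonsing_inv _ (isUnit_iff_ne_zero.mpr hdet)
  have h := loop_row hn a El hEl (fun m => (∑ j, El⁻¹ m j) + El⁻¹ m i) k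
  have e1 : ∀ j, (∑ m, El k m * El⁻¹ m j) = (1 : Matrix (Fin n) (Fin n) ℚ) k j := by
    intro j; rw [← Matrix.mul_apply, hmul]
  have hsum : (∑ m, El k m * ((∑ j, El⁻¹ m j) + El⁻¹ m i))
      = 1 + (if k = i then 1 else 0) := by
    calc (∑ m, El k m * ((∑ j, El⁻¹ m j) + El⁻¹ m i))
        = (∑ m, ∑ j, El k m * El⁻¹ m j) + ∑ m, El k m * El⁻¹ m i := by
          rw [← Finset.sum_add_distrib]
          exact Finset.sum_congr rfl fun m _ => by rw [mul_add, Finset.mul_sum]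
      _ = (∑ j, ∑ m, El k m * El⁻¹ m j) + (1 : Matrix (Fin n) (Fin n) ℚ) k i := by
          rw [Finset.sum_comm, ← Matrix.mul_apply, hmul]
      _ = (∑ j, (1 : Matrix (Fin n) (Fin n) ℚ) k j) + (1 : Matrix (Fin n) (Fin n) ℚ) k i := by
          rw [Finset.sum_congr rfl fun j _ => e1 j]
      _ = 1 + (if k = i then 1 else 0) := by
          simp [Matrix.one_apply, Finset.sum_ite_eq]
  exact h.symm.trans hsum

noncomputable def wc {n : ℕ} (E : Matrix (Fin n) (Fin n) ℚ) (i : Fin n) (t : ℕ) : ℚ :=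
  if h : t < n then (∑ j, E⁻¹ ⟨t, h⟩ j) + E⁻¹ ⟨t, h⟩ i else 0

lemma chain_iff {n : ℕ} (hn : 1 ≤ n) (a : ℕ → ℕ) (ha : ∀ i < n, 2 ≤ a i)
    (Ec : Matrix (Fin n) (Fin n) ℚ)
    (hEc : ∀ i j : Fin n, Ec i j =
      if i = j then (a i : ℚ) else if (i : ℕ) + 1 = (j : ℕ) then 1 else 0)
    (i : Fin n) :
    (∃ k : Fin n, ∃ z : ℤ, (∑ j : Fin n, Ec⁻¹ k j) + Ec⁻¹ k i = z) ↔
      ((i : ℕ) = n - 1 ∧ a (i : ℕ) = 2) := by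
  have hrec : ∀ t, t < n →
      (a t : ℚ) * wc Ec i t + wc Ec i (t + 1) = 1 + (if t = (i : ℕ) then 1 else 0) := by
    intro t ht
    have h := chain_rec a ha Ec hEc i ⟨t, ht⟩
    have hconv : (if (⟨t, ht⟩ : Fin n) = i then (1 : ℚ) else 0)
        = (if t = (i : ℕ) then 1 else 0) := by
      by_cases hti : t = (i : ℕ)
      · rw [if_pos hti, if_pos (Fin.ext hti)]
      · rw [if_neg hti, if_neg (fun hc => hti (congrArg Fin.val hc))]
    rw [← hconv]
    simp only [wc]
    rw [dif_pos ht]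
    exact h
  have hbounds : ∀ t, 0 ≤ wc Ec i t ∧ wc Ec i t ≤ 1 := by
    suffices h : ∀ m t, n ≤ t + m → 0 ≤ wc Ec i t ∧ wc Ec i t ≤ 1 by
      intro t; exact h n t (by omega)
    intro m
    induction m with
    | zero =>
      intro t ht
      rw [wc, dif_neg (by omega)]
      norm_num
    | succ m ih =>
      intro t ht
      by_cases h : t < n
      · have h2 := ih (t + 1) (by omega)
        have he := hrec t h
        have ha' : (2 : ℚ) ≤ (a t : ℕ) := by exact_mod_cast ha t h
        have hd : 0 ≤ (if t = (i : ℕ) then (1 : ℚ) else 0)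
            ∧ (if t = (i : ℕ) then (1 : ℚ) else 0) ≤ 1 := by
          split <;> norm_num
        constructor
        · nlinarith [h2.1, h2.2, hd.1, hd.2]
        · nlinarith [h2.1, h2.2, hd.1, hd.2]
      · rw [wc, dif_neg h]; norm_num
  have hw1 : ∀ t, wc Ec i t = 1 → t = (i : ℕ) ∧ (a t : ℚ) = 2 ∧ wc Ec i (t + 1) = 0 := by
    intro t h1
    have ht : t < n := by
      by_contra h
      rw [wc, dif_neg h] at h1; norm_num at h1
    have he := hrec t ht
    rw [h1, mul_one] at he
    have hb := hbounds (t + 1)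
    have ha' : (2 : ℚ) ≤ (a t : ℕ) := by exact_mod_cast ha t ht
    by_cases hti : t = (i : ℕ)
    · rw [if_pos hti] at he
      exact ⟨hti, by linarith [hb.1], by linarith [hb.1]⟩
    · rw [if_neg hti] at he
      exfalso; linarith [hb.1]
  have hw0 : ∀ t, t < n → wc Ec i t = 0 → wc Ec i (t + 1) = 1 := by
    intro t ht h0
    have he := hrec t ht
    rw [h0, mul_zero, zero_add] at he
    have hb := hbounds (t + 1)
    by_cases hti : t = (i : ℕ)
    · rw [if_pos hti] at he; exfalso; linarith [hb.2]
    · rw [if_neg hti] at he; linarith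
  have hS : ∀ t, wc Ec i t = 1 → ((i : ℕ) = n - 1 ∧ a (i : ℕ) = 2) := by
    intro t h1
    obtain ⟨hti, ha2, h0⟩ := hw1 t h1
    subst hti
    refine ⟨?_, by exact_mod_cast ha2⟩
    by_contra hne
    have hlt : (i : ℕ) + 1 < n := by have := i.isLt; omega
    have h1' := hw0 _ hlt h0
    obtain ⟨hc, -, -⟩ := hw1 _ h1'
    omega
  constructor
  · rintro ⟨k, z, hz⟩
    have hv : wc Ec i (k : ℕ) = (z : ℚ) := by
      simp only [wc]
      rw [dif_pos k.isLt]
      simpa [Fin.eta] using hz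
    have hb := hbounds (k : ℕ)
    rw [hv] at hb
    have hz01 : z = 0 ∨ z = 1 := by
      have : (0 : ℤ) ≤ z ∧ z ≤ 1 := by exact_mod_cast hb
      omega
    rcases hz01 with rfl | rfl
    · have h1 := hw0 (k : ℕ) k.isLt (by simpa using hv)
      exact hS _ h1
    · exact hS _ (by simpa using hv)
  · rintro ⟨hi, ha2⟩
    refine ⟨i, 1, ?_⟩
    have ht : (i : ℕ) < n := i.isLt
    have he := hrec (i : ℕ) ht
    rw [if_pos rfl] at he
    have hwn : wc Ec i ((i : ℕ) + 1) = 0 := by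
      rw [wc, dif_neg (by omega)]
    rw [hwn, add_zero] at he
    have ha2' : (a (i : ℕ) : ℚ) = 2 := by exact_mod_cast ha2
    rw [ha2'] at he
    have hv1 : wc Ec i (i : ℕ) = 1 := by linarith
    rw [wc, dif_pos ht] at hv1
    push_cast
    simpa [Fin.eta] using hv1

noncomputable def vl {n : ℕ} (E : Matrix (Fin n) (Fin n) ℚ) (i k : Fin n) : ℚ :=
  (∑ j, E⁻¹ k j) + E⁻¹ k i

lemma loop_iff {n : ℕ} (hn : 2 ≤ n) (a : ℕ → ℕ) (ha : ∀ i < n, 2 ≤ a i)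
    (El : Matrix (Fin n) (Fin n) ℚ)
    (hEl : ∀ i j : Fin n, El i j =
      if i = j then (a i : ℚ)
      else if (i : ℕ) + 1 = (j : ℕ) then 1
      else if (i : ℕ) = n - 1 ∧ (j : ℕ) = 0 then 1 else 0)
    (i : Fin n) :
    (∃ k : Fin n, ∃ z : ℤ, (∑ j : Fin n, El⁻¹ k j) + El⁻¹ k i = z) ↔
      (n = 2 ∧ a (i : ℕ) = 2) := by
  have hrec : ∀ k : Fin n,
      (a k : ℚ) * vl El i k + vl El i ⟨((k : ℕ) + 1) % n, Nat.mod_lt _ (by omega)⟩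
        = 1 + (if k = i then 1 else 0) := by
    intro k
    exact loop_rec hn a ha El hEl i k
  have hbounds : ∀ k, 0 ≤ vl El i k ∧ vl El i k ≤ 1 := by
    obtain ⟨k0, -, hmax⟩ := Finset.exists_max_image Finset.univ (vl El i)
      ⟨i, Finset.mem_univ _⟩
    obtain ⟨k1, -, hmin⟩ := Finset.exists_min_image Finset.univ (vl El i)
      ⟨i, Finset.mem_univ _⟩
    have e0 := hrec k0
    have e1 := hrec k1
    have ha0 : (2 : ℚ) ≤ (a k0 : ℕ) := by exact_mod_cast ha k0 k0.isLt
    have ha1 : (2 : ℚ) ≤ (a k1 : ℕ) := by exact_mod_cast ha k1 k1.isLt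
    have hd0 : 0 ≤ (if k0 = i then (1 : ℚ) else 0) ∧ (if k0 = i then (1 : ℚ) else 0) ≤ 1 := by
      split <;> norm_num
    have hd1 : 0 ≤ (if k1 = i then (1 : ℚ) else 0) ∧ (if k1 = i then (1 : ℚ) else 0) ≤ 1 := by
      split <;> norm_num
    have hnx0u : vl El i ⟨((k0 : ℕ) + 1) % n, Nat.mod_lt _ (by omega)⟩ ≤ vl El i k0 :=
      hmax _ (Finset.mem_univ _)
    have hnx0l : vl El i k1 ≤ vl El i ⟨((k0 : ℕ) + 1) % n, Nat.mod_lt _ (by omega)⟩ :=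
      hmin _ (Finset.mem_univ _)
    have hnx1u : vl El i ⟨((k1 : ℕ) + 1) % n, Nat.mod_lt _ (by omega)⟩ ≤ vl El i k0 :=
      hmax _ (Finset.mem_univ _)
    have hnx1l : vl El i k1 ≤ vl El i ⟨((k1 : ℕ) + 1) % n, Nat.mod_lt _ (by omega)⟩ :=
      hmin _ (Finset.mem_univ _)
    have hM : vl El i k0 ≤ 1 := by
      by_contra hM1
      push_neg at hM1
      have t1 : 2 * vl El i k0 ≤ (a (k0 : ℕ) : ℚ) * vl El i k0 :=
        mul_le_mul_of_nonneg_right ha0 (by linarith)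
      have hm2 : 2 * vl El i k0 + vl El i k1 ≤ 2 := by linarith
      have hmneg : vl El i k1 < 0 := by linarith
      have t2 : (a (k1 : ℕ) : ℚ) * vl El i k1 ≤ 2 * vl El i k1 := by nlinarith
      linarith
    have hm : 0 ≤ vl El i k1 := by
      by_contra hmn
      push_neg at hmn
      have t2 : (a (k1 : ℕ) : ℚ) * vl El i k1 < 0 := by nlinarith
      linarith
    intro k
    exact ⟨le_trans hm (hmin _ (Finset.mem_univ _)),
      le_trans (hmax _ (Finset.mem_univ _)) hM⟩
  have hL1 : ∀ k, vl El i k = 1 → k = i ∧ (a (k : ℕ) : ℚ) = 2 ∧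
      vl El i ⟨((k : ℕ) + 1) % n, Nat.mod_lt _ (by omega)⟩ = 0 := by
    intro k h1
    have he := hrec k
    rw [h1, mul_one] at he
    have hb := hbounds ⟨((k : ℕ) + 1) % n, Nat.mod_lt _ (by omega)⟩
    have ha' : (2 : ℚ) ≤ (a (k : ℕ) : ℕ) := by exact_mod_cast ha k k.isLt
    by_cases hki : k = i
    · rw [if_pos hki] at he
      exact ⟨hki, by linarith [hb.1], by linarith [hb.1]⟩
    · rw [if_neg hki] at he
      exfalso; linarith [hb.1]
  have hL0 : ∀ k, vl El i k = 0 →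
      vl El i ⟨((k : ℕ) + 1) % n, Nat.mod_lt _ (by omega)⟩ = 1 := by
    intro k h0
    have he := hrec k
    rw [h0, mul_zero, zero_add] at he
    have hb := hbounds ⟨((k : ℕ) + 1) % n, Nat.mod_lt _ (by omega)⟩
    by_cases hki : k = i
    · rw [if_pos hki] at he; exfalso; linarith [hb.2]
    · rw [if_neg hki] at he; linarith
  have hS : ∀ k, vl El i k = 1 → (n = 2 ∧ a (i : ℕ) = 2) := by
    intro k h1
    obtain ⟨hki, ha2, h0⟩ := hL1 k h1
    subst hki
    have h1' := hL0 _ h0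
    obtain ⟨hc, -, -⟩ := hL1 _ h1'
    have hcv : ((((k : ℕ) + 1) % n + 1) % n) = (k : ℕ) := congrArg Fin.val hc
    have hkn := k.isLt
    refine ⟨?_, by exact_mod_cast ha2⟩
    rcases Nat.lt_or_ge ((k : ℕ) + 1) n with h | h
    · rw [Nat.mod_eq_of_lt h] at hcv
      rcases Nat.lt_or_ge ((k : ℕ) + 1 + 1) n with h' | h'
      · rw [Nat.mod_eq_of_lt h'] at hcv; omega
      · rw [Nat.mod_eq_sub_mod h', Nat.mod_eq_of_lt (by omega)] at hcv
        omega
    · have hkn1 : (k : ℕ) + 1 = n := by omega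
      rw [hkn1, Nat.mod_self, Nat.mod_eq_of_lt (by omega)] at hcv
      omega
  constructor
  · rintro ⟨k, z, hz⟩
    have hv : vl El i k = (z : ℚ) := hz
    have hb := hbounds k
    rw [hv] at hb
    have hz01 : z = 0 ∨ z = 1 := by
      have : (0 : ℤ) ≤ z ∧ z ≤ 1 := by exact_mod_cast hb
      omega
    rcases hz01 with rfl | rfl
    · exact hS _ (hL0 k (by simpa using hv))
    · exact hS _ (by simpa using hv)
  · rintro ⟨hn2, ha2⟩
    subst hn2
    refine ⟨i, 1, ?_⟩
    have hii := i.isLt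
    have e_i := hrec i
    rw [if_pos rfl] at e_i
    have ha2' : (a (i : ℕ) : ℚ) = 2 := by exact_mod_cast ha2
    rw [ha2'] at e_i
    set j : Fin 2 := ⟨((i : ℕ) + 1) % 2, Nat.mod_lt _ (by omega)⟩ with hj
    have e_j := hrec j
    have hji : j ≠ i := by
      intro hc
      have := congrArg Fin.val hc
      simp only [hj] at this
      omega
    rw [if_neg hji] at e_j
    have hjn : (⟨((j : ℕ) + 1) % 2, Nat.mod_lt _ (by omega)⟩ : Fin 2) = i := by
      apply Fin.ext
      simp only [hj]
      omega
    rw [hjn] at e_j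
    have haj : (2 : ℚ) ≤ (a (j : ℕ) : ℕ) := by exact_mod_cast ha j j.isLt
    have key : (2 * (a (j : ℕ) : ℚ) - 1) * (vl El i i - 1) = 0 := by
      linear_combination (a (j : ℕ) : ℚ) * e_i - e_j
    have hv1 : vl El i i = 1 := by
      rcases mul_eq_zero.mp key with h | h
      · exfalso; linarith
      · linarith
    push_cast
    simpa [vl] using hv1

/-- With `ρ_j^{(i)} = (E⁻¹) i j` and `q i = ∑_j (E⁻¹) i j`:
for the chain exponent matrix `Ec` (`n ≥ 1`), some `q k + ρ_i^{(k)}` is an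
integer iff `i = n` (`0`-based `(i : ℕ) = n − 1`) and `a_n = 2`; for the loop
exponent matrix `El` (`n ≥ 2`), some `q k + ρ_i^{(k)}` is an integer iff `n = 2`
and `a_i = 2`. Indices are `0`-based via `Fin n`. -/
theorem broad_one_variable_generators {n : ℕ} (a : ℕ → ℕ) (ha : ∀ i < n, 2 ≤ a i)
    (Ec El : Matrix (Fin n) (Fin n) ℚ)
    (hEc : ∀ i j : Fin n, Ec i j =
      if i = j then (a i : ℚ) else if (i : ℕ) + 1 = (j : ℕ) then 1 else 0)
    (hEl : ∀ i j : Fin n, El i j =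
      if i = j then (a i : ℚ)
      else if (i : ℕ) + 1 = (j : ℕ) then 1
      else if (i : ℕ) = n - 1 ∧ (j : ℕ) = 0 then 1 else 0) :
    (1 ≤ n → ∀ i : Fin n,
      ((∃ k : Fin n, ∃ z : ℤ, (∑ j : Fin n, Ec⁻¹ k j) + Ec⁻¹ k i = z) ↔
        ((i : ℕ) = n - 1 ∧ a (i : ℕ) = 2))) ∧
    (2 ≤ n → ∀ i : Fin n,
      ((∃ k : Fin n, ∃ z : ℤ, (∑ j : Fin n, El⁻¹ k j) + El⁻¹ k i = z) ↔
        (n = 2 ∧ a (i : ℕ) = 2))) := by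
  exact ⟨fun hn i => chain_iff hn a ha Ec hEc i, fun hn i => loop_iff hn a ha El hEl i⟩
end

section
/- Let n ≥ 2 be even and let a_1, …, a_n be integers with a_i ≥ 2. Let E be the loop exponent matrix (diagonal a_i, superdiagonal 1, corner entry E_{n,1} = 1, other entries 0), ρ_j^{(i)} = (E^{-1})_{ij}, and q_i = Σ_j (E^{-1})_{ij}. Then for every 1 ≤ i ≤ n, q_i + Σ_{j odd} (a_j − 1) ρ_j^{(i)} ∈ ℤ and q_i + Σ_{j even} (a_j − 1) ρ_j^{(i)} ∈ ℤ. -/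
/-!
With `σ = finRotate n`, the loop matrix is `E = diag a + P_σ`, so `(E x)_k = a_k x_k + x_{σ k}`.
For `n` even, `σ` swaps the two parity classes of indices, hence for the indicator `x` of
either class `E x = 𝟙 + (a - 1) x`. Applying `E⁻¹`, the two sums in question are the entries of
`E⁻¹ (E x) = x`, which are `0` or `1` (or all `0` if `E` is singular, where `E⁻¹ = 0`).
-/

open Matrix Finset

theorem finRotate_eq_iff {n : ℕ} {i j : Fin n} :
    finRotate n i = j ↔ (i : ℕ) + 1 = j ∨ ((i : ℕ) = n - 1 ∧ (j : ℕ) = 0) := by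
  obtain _ | n := n
  · exact i.elim0
  rw [Fin.ext_iff, coe_finRotate]
  have := i.isLt
  split_ifs with h <;> (rw [Fin.ext_iff, Fin.val_last] at h; omega)

theorem Even.finRotate_val_mod_two {n : ℕ} (hn : Even n) (i : Fin n) :
    (finRotate n i : ℕ) % 2 = ((i : ℕ) + 1) % 2 := by
  obtain _ | n := n
  · exact i.elim0
  rw [coe_finRotate]
  obtain ⟨m, hm⟩ := hn
  split_ifs with h
  · rw [Fin.ext_iff, Fin.val_last] at h
    omega
  · rfl

theorem Even.finRotate_apply_ne {n : ℕ} (hn : Even n) (i : Fin n) : finRotate n i ≠ i :=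
  fun h => by have := hn.finRotate_val_mod_two i; rw [h] at this; omega

section

variable {ι K : Type*} [Fintype ι]

theorem Matrix.mulVec_apply_of_eq_diagonal_add_perm [DecidableEq ι] [NonAssocSemiring K]
    {σ : Equiv.Perm ι} (hσ : ∀ i, σ i ≠ i) {d : ι → K} {E : Matrix ι ι K}
    (hE : ∀ i j, E i j = if i = j then d i else if σ i = j then 1 else 0) (x : ι → K) (i : ι) :
    (E *ᵥ x) i = d i * x i + x (σ i) := by
  have hterm : ∀ j, E i j * x j =
      (if i = j then d i * x j else 0) + (if σ i = j then x j else 0) := by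
    intro j
    rw [hE]
    split_ifs with hij hσij <;> first | simp | exact absurd (hσij.trans hij.symm) (hσ i)
  simp only [mulVec, dotProduct, hterm, sum_add_distrib, sum_ite_eq, mem_univ, if_true]

theorem Matrix.mulVec_indicator_of_eq_diagonal_add_perm [DecidableEq ι] [Ring K]
    {σ : Equiv.Perm ι} (hσ : ∀ i, σ i ≠ i) {d : ι → K} {E : Matrix ι ι K}
    (hE : ∀ i j, E i j = if i = j then d i else if σ i = j then 1 else 0)
    (p : ι → Prop) [DecidablePred p] (hp : ∀ i, p (σ i) ↔ ¬ p i) :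
    E *ᵥ (fun j => if p j then 1 else 0) = fun j => 1 + if p j then d j - 1 else 0 := by
  funext i
  rw [mulVec_apply_of_eq_diagonal_add_perm hσ hE]
  by_cases hi : p i <;> simp [hi, hp]

theorem Matrix.mulVec_one_add_ite_apply [CommSemiring K] (A : Matrix ι ι K) (p : ι → Prop)
    [DecidablePred p] (c : ι → K) (i : ι) :
    (A *ᵥ fun j => 1 + if p j then c j else 0) i =
      ∑ j, A i j + ∑ j ∈ univ.filter p, c j * A i j := by
  simp only [mulVec, dotProduct, mul_add, mul_one, sum_add_distrib, sum_filter, mul_ite, mul_zero,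
    mul_comm]

theorem Matrix.exists_int_inv_mulVec_mulVec_apply [DecidableEq ι] [CommRing K]
    (A : Matrix ι ι K) {x : ι → K} (hx : ∀ j, ∃ z : ℤ, x j = z) (i : ι) :
    ∃ z : ℤ, (A⁻¹ *ᵥ (A *ᵥ x)) i = z := by
  rw [mulVec_mulVec]
  rcases A.nonsing_inv_cancel_or_zero with ⟨h, -⟩ | h
  · rw [h, one_mulVec]
    exact hx i
  · exact ⟨0, by simp [h]⟩

end

/-- Indices are `0`-based via `Fin n`: the `1`-based parity of `j : Fin n` is the parity of
`(j : ℕ) + 1`. -/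
theorem loop_special_vectors_integral_general {n : ℕ} (hev : Even n)
    (a : ℕ → ℕ)
    (E : Matrix (Fin n) (Fin n) ℚ)
    (hE : ∀ i j : Fin n, E i j =
      if i = j then (a i : ℚ)
      else if (i : ℕ) + 1 = (j : ℕ) then 1
      else if (i : ℕ) = n - 1 ∧ (j : ℕ) = 0 then 1 else 0) :
    ∀ i : Fin n,
      (∃ z : ℤ, (∑ j : Fin n, E⁻¹ i j) +
        (∑ j ∈ Finset.univ.filter (fun j : Fin n => ((j : ℕ) + 1) % 2 = 1),
          ((a (j : ℕ) : ℚ) - 1) * E⁻¹ i j) = z) ∧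
      (∃ z : ℤ, (∑ j : Fin n, E⁻¹ i j) +
        (∑ j ∈ Finset.univ.filter (fun j : Fin n => ((j : ℕ) + 1) % 2 = 0),
          ((a (j : ℕ) : ℚ) - 1) * E⁻¹ i j) = z) := by
  have hE' : ∀ i j : Fin n, E i j =
      if i = j then (a i : ℚ) else if finRotate n i = j then 1 else 0 := by
    intro i j
    rw [hE]
    simp only [finRotate_eq_iff]
    split_ifs <;> tauto
  have parity_class : ∀ c < 2, ∀ i : Fin n, ∃ z : ℤ, (∑ j : Fin n, E⁻¹ i j) +
      ∑ j ∈ univ.filter (fun j : Fin n => ((j : ℕ) + 1) % 2 = c),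
        ((a (j : ℕ) : ℚ) - 1) * E⁻¹ i j = z := by
    intro c hc i
    have hswap : ∀ j : Fin n, ((finRotate n j : ℕ) + 1) % 2 = c ↔ ¬ ((j : ℕ) + 1) % 2 = c := by
      intro j
      have := hev.finRotate_val_mod_two j
      omega
    rw [← mulVec_one_add_ite_apply,
      ← mulVec_indicator_of_eq_diagonal_add_perm hev.finRotate_apply_ne hE' _ hswap]
    exact exists_int_inv_mulVec_mulVec_apply E (fun j => by
      split_ifs
      exacts [⟨1, Int.cast_one.symm⟩, ⟨0, Int.cast_zero.symm⟩]) i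
  exact fun i => ⟨parity_class 1 (by norm_num) i, parity_class 0 (by norm_num) i⟩

/-- For the loop exponent matrix `E` with `n` even, with
`ρ_j^{(i)} = (E⁻¹) i j` and `q i = ∑_j (E⁻¹) i j`, both
`q i + ∑_{j odd} (a_j − 1) ρ_j^{(i)}` and `q i + ∑_{j even} (a_j − 1) ρ_j^{(i)}`
are integers for every `i`. Indices are `0`-based via `Fin n`, and the `1`-based
parity of `j : Fin n` is the parity of `(j : ℕ) + 1`. -/
theorem loop_special_vectors_integral {n : ℕ} (hn : 2 ≤ n) (hev : Even n)
    (a : ℕ → ℕ) (ha : ∀ i < n, 2 ≤ a i)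
    (E : Matrix (Fin n) (Fin n) ℚ)
    (hE : ∀ i j : Fin n, E i j =
      if i = j then (a i : ℚ)
      else if (i : ℕ) + 1 = (j : ℕ) then 1
      else if (i : ℕ) = n - 1 ∧ (j : ℕ) = 0 then 1 else 0) :
    ∀ i : Fin n,
      (∃ z : ℤ, (∑ j : Fin n, E⁻¹ i j) +
        (∑ j ∈ Finset.univ.filter (fun j : Fin n => ((j : ℕ) + 1) % 2 = 1),
          ((a (j : ℕ) : ℚ) - 1) * E⁻¹ i j) = z) ∧
      (∃ z : ℤ, (∑ j : Fin n, E⁻¹ i j) +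
        (∑ j ∈ Finset.univ.filter (fun j : Fin n => ((j : ℕ) + 1) % 2 = 0),
          ((a (j : ℕ) : ℚ) - 1) * E⁻¹ i j) = z) :=
  loop_special_vectors_integral_general hev a E hE
end

section
/- Let n ≥ 1 and let a_1, …, a_n, ℓ_1, …, ℓ_n, p_1, …, p_n, q_1, …, q_n, K_1, …, K_n be integers with a_i ≥ 2, ℓ_i ≥ 0, p_i ≥ 0, q_i ≥ 0, p_i + q_i ≤ 2a_i − 2 for all i, and suppose p_i + q_i = a_i(ℓ_i − K_i + 1) + (ℓ_{i+1} − K_{i+1} + 1) − ℓ_i − 2 for 1 ≤ i ≤ n−1 and p_n + q_n = a_n(ℓ_n − K_n + 1) − ℓ_n − 2. Then: (a) for every 1 ≤ i ≤ n−1 with K_i ≤ −1, one has K_i + K_{i+1} ≥ 0, and if moreover K_i + K_{i+1} = 0 then (K_i, K_{i+1}) = (−1, 1), ℓ_i = ℓ_{i+1} = 0, and p_i + q_i = 2a_i − 2; (b) −1 ≤ K_n ≤ ℓ_n, and if K_n = −1 then ℓ_n = 0 and p_n + q_n = 2a_n − 2. -/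
set_option maxHeartbeats 1000000 in
/-- Constraints on the reconstruction indices `K_i` for
chain-type correlators (Lemma on the structure of `K`). Indices are `0`-based:
`i` runs over `0, …, n−1`, the `1`-based index `n` is `n − 1`. -/
theorem reconstruction_K_structure {n : ℕ} (hn : 1 ≤ n)
    (a l p q K : ℕ → ℤ)
    (ha : ∀ i < n, 2 ≤ a i) (hl : ∀ i < n, 0 ≤ l i)
    (hp : ∀ i < n, 0 ≤ p i) (hq : ∀ i < n, 0 ≤ q i)
    (hpq : ∀ i < n, p i + q i ≤ 2 * a i - 2)
    (hrel : ∀ i, i + 1 < n →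
      p i + q i = a i * (l i - K i + 1) + (l (i + 1) - K (i + 1) + 1) - l i - 2)
    (hreln : p (n - 1) + q (n - 1) =
      a (n - 1) * (l (n - 1) - K (n - 1) + 1) - l (n - 1) - 2) :
    (∀ i, i + 1 < n → K i ≤ -1 →
        0 ≤ K i + K (i + 1) ∧
          (K i + K (i + 1) = 0 →
            K i = -1 ∧ K (i + 1) = 1 ∧ l i = 0 ∧ l (i + 1) = 0 ∧
              p i + q i = 2 * a i - 2)) ∧
      (-1 ≤ K (n - 1) ∧ K (n - 1) ≤ l (n - 1) ∧
        (K (n - 1) = -1 →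
          l (n - 1) = 0 ∧ p (n - 1) + q (n - 1) = 2 * a (n - 1) - 2)) := by
  have hm : n - 1 < n := Nat.sub_lt hn one_pos
  constructor
  · intro i hi hKi
    have hin : i < n := by omega
    have ha1 := ha i hin
    have hl1 := hl i hin
    have hl2 := hl (i + 1) hi
    have hpq1 := hpq i hin
    have hp1 := hp i hin
    have hq1 := hq i hin
    have hr := hrel i hi
    -- key inequality: 2 K i + K (i+1) ≥ (a i - 1) * l i + l (i+1) - 1
    have key : (a i - 1) * l i + l (i + 1) - 1 ≤ 2 * K i + K (i + 1) := by
      nlinarith [mul_nonneg (by linarith : (0:ℤ) ≤ a i - 2) (by linarith : (0:ℤ) ≤ -K i - 1),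
        mul_nonneg (by linarith : (0:ℤ) ≤ a i - 1) hl1]
    have hsum : 0 ≤ K i + K (i + 1) := by
      nlinarith [mul_nonneg (by linarith : (0:ℤ) ≤ a i - 1) hl1]
    refine ⟨hsum, fun hEq => ?_⟩
    have hKi1 : K i = -1 := by
      nlinarith [mul_nonneg (by linarith : (0:ℤ) ≤ a i - 1) hl1]
    have hKj : K (i + 1) = 1 := by linarith
    have hli : l i = 0 := by
      nlinarith [mul_nonneg (by linarith : (0:ℤ) ≤ a i - 2) hl1]
    have hlj : l (i + 1) = 0 := by
      nlinarith [mul_nonneg (by linarith : (0:ℤ) ≤ a i - 1) hl1]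
    refine ⟨hKi1, hKj, hli, hlj, ?_⟩
    rw [hr, hKi1, hKj, hli, hlj]; ring
  · have ha1 := ha (n - 1) hm
    have hl1 := hl (n - 1) hm
    have hpq1 := hpq (n - 1) hm
    have hp1 := hp (n - 1) hm
    have hq1 := hq (n - 1) hm
    have h1 : -1 ≤ K (n - 1) := by
      by_contra h
      push_neg at h
      nlinarith [mul_nonneg (by linarith : (0:ℤ) ≤ a (n - 1) - 2)
          (by linarith : (0:ℤ) ≤ -K (n - 1) - 2),
        mul_nonneg (by linarith : (0:ℤ) ≤ a (n - 1) - 1) hl1]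
    have h2 : K (n - 1) ≤ l (n - 1) := by
      by_contra h
      push_neg at h
      have hnp : a (n - 1) * (l (n - 1) - K (n - 1) + 1) ≤ 0 :=
        mul_nonpos_of_nonneg_of_nonpos (by linarith) (by linarith)
      linarith
    refine ⟨h1, h2, fun hK => ?_⟩
    have hl0 : l (n - 1) = 0 := by
      nlinarith [mul_nonneg (by linarith : (0:ℤ) ≤ a (n - 1) - 2) hl1]
    refine ⟨hl0, ?_⟩
    rw [hreln, hK, hl0]; ring
end
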